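/- arXiv:math/0106010 — 6 statements merged into one kernel-verified Lean document; each statement's English description precedes it below -/
import Mathlib

section
/- If g is a group-like element of a weak Hopf algebra H, then ε_t(g) = 1 and ε_s(g) = 1. -/
open TensorProduct
set_option maxHeartbeats 1000000
set_option synthInstance.maxHeartbeats 400000

/-- A weak Hopf algebra over a field `k` (Böhm–Nill–Szlachányi):
an algebra and coalgebra with multiplicative comultiplication, the weak
unit/counit axioms, and an antipode. -/
structure WeakHopf (k H : Type*) [Field k] [Ring H] [Algebra k H] where
  comul : H →ₗ[k] H ⊗[k] H
  counit : H →ₗ[k] k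
  antipode : H →ₗ[k] H
  coassoc : ∀ h : H,
    (TensorProduct.assoc k H H H) ((TensorProduct.map comul LinearMap.id) (comul h)) =
      (TensorProduct.map LinearMap.id comul) (comul h)
  counit_comul : ∀ h : H,
    (TensorProduct.lid k H) ((TensorProduct.map counit LinearMap.id) (comul h)) = h
  comul_counit : ∀ h : H,
    (TensorProduct.rid k H) ((TensorProduct.map LinearMap.id counit) (comul h)) = h
  comul_mul : ∀ a b : H, comul (a * b) = comul a * comul b
  -- (Δ⊗id)Δ(1) = (Δ(1)⊗1)(1⊗Δ(1)) = (1⊗Δ(1))(Δ(1)⊗1)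
  weak_unit_left :
    (TensorProduct.map comul LinearMap.id) (comul 1) =
      (comul 1 ⊗ₜ[k] (1 : H)) *
        ((TensorProduct.assoc k H H H).symm ((1 : H) ⊗ₜ[k] comul 1))
  weak_unit_right :
    (TensorProduct.map comul LinearMap.id) (comul 1) =
      ((TensorProduct.assoc k H H H).symm ((1 : H) ⊗ₜ[k] comul 1)) *
        (comul 1 ⊗ₜ[k] (1 : H))
  -- ε(fgh) = ε(fg₁)ε(g₂h) = ε(fg₂)ε(g₁h)
  weak_counit_left : ∀ f g h : H,
    counit (f * g * h) =
      (TensorProduct.lid k k)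
        ((TensorProduct.map (counit ∘ₗ LinearMap.mulLeft k f)
          (counit ∘ₗ LinearMap.mulRight k h)) (comul g))
  weak_counit_right : ∀ f g h : H,
    counit (f * g * h) =
      (TensorProduct.lid k k)
        ((TensorProduct.map (counit ∘ₗ LinearMap.mulLeft k f)
          (counit ∘ₗ LinearMap.mulRight k h)) ((TensorProduct.comm k H H) (comul g)))
  -- h₁S(h₂) = ε(1₁h)1₂  (target counital map)
  antipode_right : ∀ h : H,
    (LinearMap.mul' k H) ((TensorProduct.map LinearMap.id antipode) (comul h)) =
      (TensorProduct.lid k H)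
        ((TensorProduct.map (counit ∘ₗ LinearMap.mulRight k h) LinearMap.id) (comul 1))
  -- S(h₁)h₂ = 1₁ε(h1₂)  (source counital map)
  antipode_left : ∀ h : H,
    (LinearMap.mul' k H) ((TensorProduct.map antipode LinearMap.id) (comul h)) =
      (TensorProduct.rid k H)
        ((TensorProduct.map LinearMap.id (counit ∘ₗ LinearMap.mulLeft k h)) (comul 1))
  -- S(h₁)h₂S(h₃) = S(h)
  antipode_mid : ∀ h : H,
    (LinearMap.mul' k H)
      ((TensorProduct.map (LinearMap.mul' k H ∘ₗ TensorProduct.map antipode LinearMap.id)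
        antipode) ((TensorProduct.map comul LinearMap.id) (comul h))) = antipode h

namespace WeakHopf

variable {k H : Type*} [Field k] [Ring H] [Algebra k H] (W : WeakHopf k H)

/-- The target counital map ε_t(h) = ε(1₁h)1₂, as a linear map. -/
noncomputable def εtL : H →ₗ[k] H :=
  (TensorProduct.lid k H).toLinearMap
    ∘ₗ TensorProduct.map
        (W.counit ∘ₗ LinearMap.mul' k H ∘ₗ (TensorProduct.comm k H H).toLinearMap)
        LinearMap.id
    ∘ₗ (TensorProduct.assoc k H H H).symm.toLinearMap
    ∘ₗ (TensorProduct.mk k H (H ⊗[k] H)).flip (W.comul 1)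

/-- The source counital map ε_s(h) = 1₁ε(h1₂), as a linear map. -/
noncomputable def εsL : H →ₗ[k] H :=
  (TensorProduct.rid k H).toLinearMap
    ∘ₗ TensorProduct.map LinearMap.id
        (W.counit ∘ₗ LinearMap.mul' k H ∘ₗ (TensorProduct.comm k H H).toLinearMap)
    ∘ₗ (TensorProduct.assoc k H H H).toLinearMap
    ∘ₗ (TensorProduct.mk k (H ⊗[k] H) H) (W.comul 1)

/-- The minimal weak Hopf subalgebra H_min = H_t H_s (as a subspace). -/
noncomputable def Hmin : Submodule k H :=
  Submodule.span k
    {x : H | ∃ z ∈ Set.range ⇑W.εtL, ∃ y ∈ Set.range ⇑W.εsL, x = z * y}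

/-- g ∈ H is group-like: invertible and Δ(g) = (g⊗g)Δ(1) = Δ(1)(g⊗g). -/
def IsGroupLike (g : H) : Prop :=
  IsUnit g ∧ W.comul g = (g ⊗ₜ[k] g) * W.comul 1 ∧
    W.comul g = W.comul 1 * (g ⊗ₜ[k] g)

/-- The convolution product on H* = (H →ₗ[k] k): ⟨φψ, h⟩ = ⟨φ, h₁⟩⟨ψ, h₂⟩. -/
noncomputable def dualMul (φ ψ : H →ₗ[k] k) : H →ₗ[k] k :=
  (TensorProduct.lid k k).toLinearMap ∘ₗ TensorProduct.map φ ψ ∘ₗ W.comul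

/-- γ ∈ H* is group-like: invertible in H* and
⟨γ,hg⟩ = ⟨γ,h1₁⟩⟨γ,S(1₂)g⟩ = ⟨γ,hS(1₁)⟩⟨γ,1₂g⟩ for all h,g. -/
noncomputable def IsGroupLikeDual (γ : H →ₗ[k] k) : Prop :=
  (∃ β : H →ₗ[k] k, W.dualMul γ β = W.counit ∧ W.dualMul β γ = W.counit) ∧
  (∀ h g : H, γ (h * g) =
    (TensorProduct.lid k k)
      ((TensorProduct.map (γ ∘ₗ LinearMap.mulLeft k h)
        (γ ∘ₗ LinearMap.mulRight k g ∘ₗ W.antipode)) (W.comul 1))) ∧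
  (∀ h g : H, γ (h * g) =
    (TensorProduct.lid k k)
      ((TensorProduct.map (γ ∘ₗ LinearMap.mulLeft k h ∘ₗ W.antipode)
        (γ ∘ₗ LinearMap.mulRight k g)) (W.comul 1)))

/-- x is a left integral in H: hx = ε_t(h)x for all h. -/
def IsLeftIntegral (x : H) : Prop := ∀ h : H, h * x = W.εtL h * x

/-- The space of left integrals in H. -/
noncomputable def leftIntegrals : Submodule k H where
  carrier := {x : H | ∀ h : H, h * x = W.εtL h * x}
  add_mem' := fun ha hb h => by rw [mul_add, ha h, hb h, mul_add]
  zero_mem' := fun h => by rw [mul_zero, mul_zero]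
  smul_mem' := fun c x hx h => by rw [mul_smul_comm, hx h, mul_smul_comm]

/-- λ ∈ H* is a left integral in H*: equivalently h₁λ(h₂) = ε_s(h₁)λ(h₂). -/
noncomputable def IsLeftIntegralDual (lam : H →ₗ[k] k) : Prop :=
  ∀ h : H,
    (TensorProduct.rid k H) ((TensorProduct.map LinearMap.id lam) (W.comul h)) =
      (TensorProduct.rid k H) ((TensorProduct.map W.εsL lam) (W.comul h))

/-- The action y·h := ⟨γ, yh1₁⟩S(1₂) of H on H_s associated to γ ∈ H*. -/
noncomputable def act (γ : H →ₗ[k] k) (y h : H) : H :=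
  (TensorProduct.lid k H)
    ((TensorProduct.map (γ ∘ₗ LinearMap.mulLeft k (y * h)) W.antipode) (W.comul 1))

/-- ε_t^g(ψ) ∈ H*, given by ⟨ε_t^g(ψ), x⟩ = ε(S(x)g₁)ψ(g₂). -/
noncomputable def etg (g : H) (ψ : H →ₗ[k] k) : H →ₗ[k] k :=
  (TensorProduct.lid k k).toLinearMap
    ∘ₗ TensorProduct.map (W.counit ∘ₗ LinearMap.mul' k H) ψ
    ∘ₗ (TensorProduct.assoc k H H H).symm.toLinearMap
    ∘ₗ (TensorProduct.mk k H (H ⊗[k] H)).flip (W.comul g)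
    ∘ₗ W.antipode

/-- L_g = {φ ∈ H* : ψφ = ε_t^g(ψ)φ for all ψ}. -/
noncomputable def Lset (g : H) : Set (H →ₗ[k] k) :=
  {φ | ∀ ψ : H →ₗ[k] k, W.dualMul ψ φ = W.dualMul (W.etg g ψ) φ}

end WeakHopf

/-- For group-like g, ε_t(g) = 1 and ε_s(g) = 1. -/
theorem weakHopf_groupLike_counital {k H : Type*} [Field k] [Ring H] [Algebra k H]
    (W : WeakHopf k H) (g : H) (hg : W.IsGroupLike g) :
    W.εtL g = 1 ∧ W.εsL g = 1 := by
  obtain ⟨hu, hΔ1, hΔ2⟩ := hg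
  obtain ⟨u, rfl⟩ := hu
  constructor
  · have key : ∀ t : H ⊗[k] H,
        ((TensorProduct.lid k H)
          ((TensorProduct.map
            (W.counit ∘ₗ LinearMap.mul' k H ∘ₗ (TensorProduct.comm k H H).toLinearMap)
            LinearMap.id)
            ((TensorProduct.assoc k H H H).symm ((u : H) ⊗ₜ[k] t)))) * (u : H) =
        (TensorProduct.lid k H)
          ((TensorProduct.map W.counit LinearMap.id) (t * ((u : H) ⊗ₜ[k] (u : H)))) := by
      intro t
      induction t using TensorProduct.induction_on with
      | zero => simp [TensorProduct.tmul_zero, TensorProduct.zero_tmul]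
      | tmul a b => simp [Algebra.TensorProduct.tmul_mul_tmul, smul_mul_assoc]
      | add x y hx hy =>
        simp only [map_add, add_mul, TensorProduct.add_tmul, TensorProduct.tmul_add,
          add_mul] at *
        rw [hx, hy]
    have ht : W.εtL (u : H) * (u : H) = (u : H) := by
      have h1 : W.εtL (u : H) * (u : H) = (TensorProduct.lid k H)
          ((TensorProduct.map W.counit LinearMap.id) (W.comul 1 * ((u : H) ⊗ₜ[k] (u : H)))) := by
        simpa [WeakHopf.εtL] using key (W.comul 1)
      rw [h1, ← hΔ2, W.counit_comul]
    calc W.εtL (u : H) = W.εtL (u : H) * (u : H) * (↑u⁻¹ : H) := by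
          rw [mul_assoc, Units.mul_inv, mul_one]
      _ = 1 := by rw [ht, Units.mul_inv]
  · have key : ∀ t : H ⊗[k] H,
        (u : H) * ((TensorProduct.rid k H)
          ((TensorProduct.map LinearMap.id
            (W.counit ∘ₗ LinearMap.mul' k H ∘ₗ (TensorProduct.comm k H H).toLinearMap))
            ((TensorProduct.assoc k H H H) (t ⊗ₜ[k] (u : H))))) =
        (TensorProduct.rid k H)
          ((TensorProduct.map LinearMap.id W.counit) (((u : H) ⊗ₜ[k] (u : H)) * t)) := by
      intro t
      induction t using TensorProduct.induction_on with
      | zero => simp [TensorProduct.tmul_zero, TensorProduct.zero_tmul]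
      | tmul a b => simp [Algebra.TensorProduct.tmul_mul_tmul, mul_smul_comm]
      | add x y hx hy =>
        simp only [map_add, mul_add, TensorProduct.add_tmul, TensorProduct.tmul_add] at *
        rw [hx, hy]
    have hs : (u : H) * W.εsL (u : H) = (u : H) := by
      have h1 : (u : H) * W.εsL (u : H) = (TensorProduct.rid k H)
          ((TensorProduct.map LinearMap.id W.counit) (((u : H) ⊗ₜ[k] (u : H)) * W.comul 1)) := by
        simpa [WeakHopf.εsL] using key (W.comul 1)
      rw [h1, ← hΔ1, W.comul_counit]
    calc W.εsL (u : H) = (↑u⁻¹ : H) * ((u : H) * W.εsL (u : H)) := by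
          rw [← mul_assoc, Units.inv_mul, one_mul]
      _ = 1 := by rw [hs, Units.inv_mul]
end

section
/- If g is a group-like element of a weak Hopf algebra H, then S(g) = g⁻¹, and g⁻¹ is also group-like. -/
open TensorProduct

section AuxWGL

variable {k H : Type*} [Field k] [Ring H] [Algebra k H] (W : WeakHopf k H) (g : H)

private lemma auxH1 (x : H ⊗[k] H) :
    (TensorProduct.lid k H) ((TensorProduct.map W.counit LinearMap.id) (x * (g ⊗ₜ[k] g))) =
      (TensorProduct.lid k H)
        ((TensorProduct.map (W.counit ∘ₗ LinearMap.mulRight k g) LinearMap.id) x) * g := by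
  induction x using TensorProduct.induction_on with
  | zero => simp
  | tmul a b =>
      simp [Algebra.TensorProduct.tmul_mul_tmul, smul_mul_assoc]
  | add x y hx hy => simp [add_mul, hx, hy]

private lemma auxH2 (x : H ⊗[k] H) :
    (TensorProduct.rid k H) ((TensorProduct.map LinearMap.id W.counit) ((g ⊗ₜ[k] g) * x)) =
      g * (TensorProduct.rid k H)
        ((TensorProduct.map LinearMap.id (W.counit ∘ₗ LinearMap.mulLeft k g)) x) := by
  induction x using TensorProduct.induction_on with
  | zero => simp
  | tmul a b =>
      simp [Algebra.TensorProduct.tmul_mul_tmul, mul_smul_comm]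
  | add x y hx hy => simp [mul_add, hx, hy]

private lemma auxH3 (x : H ⊗[k] H) :
    (LinearMap.mul' k H) ((TensorProduct.map LinearMap.id W.antipode) ((g ⊗ₜ[k] g) * x)) =
      g * (LinearMap.mul' k H)
        ((TensorProduct.map LinearMap.id (W.antipode ∘ₗ LinearMap.mulLeft k g)) x) := by
  induction x using TensorProduct.induction_on with
  | zero => simp
  | tmul a b =>
      simp [Algebra.TensorProduct.tmul_mul_tmul, mul_assoc]
  | add x y hx hy => simp [mul_add, hx, hy]

private lemma auxH4 (x : H ⊗[k] H) :
    (LinearMap.mul' k H) ((TensorProduct.map W.antipode LinearMap.id) ((g ⊗ₜ[k] g) * x)) =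
      (LinearMap.mul' k H)
        ((TensorProduct.map (W.antipode ∘ₗ LinearMap.mulLeft k g) (LinearMap.mulLeft k g)) x) := by
  induction x using TensorProduct.induction_on with
  | zero => simp
  | tmul a b =>
      simp [Algebra.TensorProduct.tmul_mul_tmul]
  | add x y hx hy => simp [mul_add, hx, hy]

private lemma auxMapComulMul (x y : H ⊗[k] H) :
    TensorProduct.map W.comul LinearMap.id (x * y) =
      TensorProduct.map W.comul LinearMap.id x * TensorProduct.map W.comul LinearMap.id y := by
  induction x using TensorProduct.induction_on with
  | zero => simp
  | tmul a b =>
      induction y using TensorProduct.induction_on with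
      | zero => simp
      | tmul c d =>
          simp [Algebra.TensorProduct.tmul_mul_tmul, W.comul_mul]
      | add y z hy hz => simp [mul_add, hy, hz]
  | add x z hx hz => simp [add_mul, hx, hz]

private lemma auxBig (x y : H ⊗[k] H) :
    (LinearMap.mul' k H)
      ((TensorProduct.map (LinearMap.mul' k H ∘ₗ TensorProduct.map W.antipode LinearMap.id)
        W.antipode)
        ((((g ⊗ₜ[k] g) ⊗ₜ[k] g) * (x ⊗ₜ[k] (1 : H))) *
          (TensorProduct.assoc k H H H).symm ((1 : H) ⊗ₜ[k] y))) =
      (LinearMap.mul' k H)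
        ((TensorProduct.map (W.antipode ∘ₗ LinearMap.mulLeft k g) (LinearMap.mulLeft k g)) x) *
      (LinearMap.mul' k H)
        ((TensorProduct.map LinearMap.id (W.antipode ∘ₗ LinearMap.mulLeft k g)) y) := by
  induction x using TensorProduct.induction_on with
  | zero => simp
  | tmul a b =>
      induction y using TensorProduct.induction_on with
      | zero =>
          rw [TensorProduct.tmul_zero, LinearEquiv.map_zero]
          simp
      | tmul c d =>
          simp [Algebra.TensorProduct.tmul_mul_tmul, TensorProduct.assoc_symm_tmul, mul_assoc]
      | add y z hy hz =>
          rw [TensorProduct.tmul_add, LinearEquiv.map_add]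
          simp only [mul_add, map_add, hy, hz]
  | add x z hx hz =>
      simp only [TensorProduct.add_tmul, add_mul, mul_add, map_add, hx, hz]

end AuxWGL

/-- For group-like g, S(g) = g⁻¹, and g⁻¹ is group-like. -/
theorem weakHopf_groupLike_antipode {k H : Type*} [Field k] [Ring H] [Algebra k H]
    (W : WeakHopf k H) (g : H) (hg : W.IsGroupLike g) :
    W.antipode g * g = 1 ∧ g * W.antipode g = 1 ∧ W.IsGroupLike (W.antipode g) := by
  obtain ⟨hu, hD1, hD2⟩ := hg
  obtain ⟨gu, hgu⟩ := hu
  set gi : H := ↑gu⁻¹ with hgi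
  have hgig : gi * g = 1 := by rw [← hgu]; exact gu.inv_mul
  have hggi : g * gi = 1 := by rw [← hgu]; exact gu.mul_inv
  have cancel_right : ∀ x : H, x * g = g → x = 1 := by
    intro x hx
    have h2 : x * g * gi = g * gi := by rw [hx]
    rwa [mul_assoc, hggi, mul_one] at h2
  have cancel_left : ∀ x : H, g * x = g → x = 1 := by
    intro x hx
    have h2 : gi * (g * x) = gi * g := by rw [hx]
    rwa [← mul_assoc, hgig, one_mul] at h2
  have inv_of_right : ∀ x : H, g * x = 1 → x = gi := by
    intro x hx
    have h2 : gi * (g * x) = gi * 1 := by rw [hx]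
    rwa [← mul_assoc, hgig, one_mul, mul_one] at h2
  set u : H ⊗[k] H := W.comul 1 with hu_def
  have huu : u * u = u := by rw [← W.comul_mul, one_mul]
  -- ε_t(g) = 1
  have het : (TensorProduct.lid k H)
      ((TensorProduct.map (W.counit ∘ₗ LinearMap.mulRight k g) LinearMap.id) u) = 1 := by
    apply cancel_right
    have h := W.counit_comul g
    rw [hD2, auxH1] at h
    exact h
  -- ε_s(g) = 1
  have hes : (TensorProduct.rid k H)
      ((TensorProduct.map LinearMap.id (W.counit ∘ₗ LinearMap.mulLeft k g)) u) = 1 := by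
    apply cancel_left
    have h := W.comul_counit g
    rw [hD1, auxH2] at h
    exact h
  -- g * A = 1 where A = m((id ⊗ S∘mulLeft g) u)
  set A : H := (LinearMap.mul' k H)
      ((TensorProduct.map LinearMap.id (W.antipode ∘ₗ LinearMap.mulLeft k g)) u) with hA
  have hgA : g * A = 1 := by
    have h := W.antipode_right g
    rw [hD1, auxH3] at h
    rw [← hA] at h
    rw [h, het]
  have hAval : A = gi := inv_of_right A hgA
  -- B = 1
  set B : H := (LinearMap.mul' k H)
      ((TensorProduct.map (W.antipode ∘ₗ LinearMap.mulLeft k g) (LinearMap.mulLeft k g)) u)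
    with hB
  have hB1 : B = 1 := by
    have h := W.antipode_left g
    rw [hD1, auxH4] at h
    rw [← hB] at h
    rw [h, hes]
  -- (Δ ⊗ id) Δ(g) = ((g⊗g)⊗g) * (u⊗1) * assoc⁻¹(1⊗u)
  have hX : (TensorProduct.map W.comul LinearMap.id) (W.comul g) =
      (((g ⊗ₜ[k] g) ⊗ₜ[k] g) * (u ⊗ₜ[k] (1 : H))) *
        (TensorProduct.assoc k H H H).symm ((1 : H) ⊗ₜ[k] u) := by
    have h1 : (TensorProduct.map W.comul LinearMap.id) (W.comul g) =
        (TensorProduct.map W.comul LinearMap.id) (g ⊗ₜ[k] g) *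
          (TensorProduct.map W.comul LinearMap.id) u := by
      rw [hD1, auxMapComulMul]
    rw [h1]
    have h2 : (TensorProduct.map W.comul LinearMap.id) (g ⊗ₜ[k] g) =
        ((g ⊗ₜ[k] g) ⊗ₜ[k] g) * (u ⊗ₜ[k] (1 : H)) := by
      rw [TensorProduct.map_tmul, LinearMap.id_apply, hD1,
        Algebra.TensorProduct.tmul_mul_tmul, mul_one]
    have h3 : (TensorProduct.map W.comul LinearMap.id) u =
        (u ⊗ₜ[k] (1 : H)) * (TensorProduct.assoc k H H H).symm ((1 : H) ⊗ₜ[k] u) :=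
      W.weak_unit_left
    rw [h2, h3]
    rw [mul_assoc, mul_assoc, ← mul_assoc (u ⊗ₜ[k] (1 : H)),
      Algebra.TensorProduct.tmul_mul_tmul, huu, mul_one]
  -- S(g) = B * A
  have hSg : W.antipode g = B * A := by
    have h := W.antipode_mid g
    rw [hX, auxBig] at h
    rw [← hB, ← hA] at h
    exact h.symm
  have hSgi : W.antipode g = gi := by rw [hSg, hB1, one_mul, hAval]
  refine ⟨by rw [hSgi]; exact hgig, by rw [hSgi]; exact hggi, ?_⟩
  -- g⁻¹ is group-like
  rw [hSgi]
  have hPu' : (g ⊗ₜ[k] g) * u = u * (g ⊗ₜ[k] g) := by rw [← hD1, ← hD2]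
  set P : H ⊗[k] H := g ⊗ₜ[k] g with hP
  set Q : H ⊗[k] H := gi ⊗ₜ[k] gi with hQ
  have hQP : Q * P = 1 := by
    rw [hQ, hP, Algebra.TensorProduct.tmul_mul_tmul, hgig, Algebra.TensorProduct.one_def]
  have hPQ : P * Q = 1 := by
    rw [hQ, hP, Algebra.TensorProduct.tmul_mul_tmul, hggi, Algebra.TensorProduct.one_def]
  have hPu : P * u = u * P := hPu'
  have huQ : u * Q = Q * u := by
    calc u * Q = 1 * (u * Q) := by rw [one_mul]
      _ = Q * (P * u) * Q := by rw [← hQP]; noncomm_ring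
      _ = Q * (u * P) * Q := by rw [hPu]
      _ = Q * u * (P * Q) := by noncomm_ring
      _ = Q * u := by rw [hPQ, mul_one]
  have hDgi : W.comul gi = Q * u := by
    have e1 : W.comul gi * W.comul g = u := by rw [← W.comul_mul, hgig]
    have e2 : W.comul gi = W.comul gi * u := by
      rw [hu_def, ← W.comul_mul, mul_one]
    have e3 : W.comul g * (Q * u) = u := by
      rw [hD1]
      calc P * u * (Q * u) = P * (u * Q) * u := by noncomm_ring
        _ = P * (Q * u) * u := by rw [huQ]
        _ = (P * Q) * (u * u) := by noncomm_ring
        _ = u := by rw [hPQ, one_mul, huu]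
    calc W.comul gi = W.comul gi * u := e2
      _ = W.comul gi * (W.comul g * (Q * u)) := by rw [e3]
      _ = (W.comul gi * W.comul g) * (Q * u) := by rw [mul_assoc]
      _ = u * (Q * u) := by rw [e1]
      _ = (u * Q) * u := by rw [mul_assoc]
      _ = Q * (u * u) := by rw [huQ, mul_assoc]
      _ = Q * u := by rw [huu]
  exact ⟨⟨gu⁻¹, rfl⟩, by rw [hDgi, ← hu_def, hQ], by rw [hDgi, huQ.symm, ← hu_def, hQ]⟩
end

section
/- The set of group-like elements of a weak Hopf algebra H forms a group under multiplication: the product of two group-like elements is group-like, 1 is group-like, and the inverse of a group-like element is group-like. -/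
open TensorProduct

/-- Group-like elements form a group under multiplication. -/
theorem weakHopf_groupLike_group {k H : Type*} [Field k] [Ring H] [Algebra k H]
    (W : WeakHopf k H) :
    W.IsGroupLike (1 : H) ∧
    (∀ g h : H, W.IsGroupLike g → W.IsGroupLike h → W.IsGroupLike (g * h)) ∧
    (∀ g g' : H, W.IsGroupLike g → g * g' = 1 → g' * g = 1 → W.IsGroupLike g') := by
  constructor
  · exact ⟨isUnit_one, by rw [← Algebra.TensorProduct.one_def, one_mul],
      by rw [← Algebra.TensorProduct.one_def, mul_one]⟩
  constructor
  · rintro g h ⟨ug, hg1, hg2⟩ ⟨uh, hh1, hh2⟩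
    refine ⟨ug.mul uh, ?_, ?_⟩
    · rw [W.comul_mul, hg1, mul_assoc, ← W.comul_mul, one_mul,
        ← Algebra.TensorProduct.tmul_mul_tmul, mul_assoc, ← hh1]
    · rw [W.comul_mul, hh2, ← mul_assoc, ← W.comul_mul, mul_one,
        ← Algebra.TensorProduct.tmul_mul_tmul, ← mul_assoc, ← hg2]
  · rintro g g' ⟨ug, hg1, hg2⟩ hgg' hg'g
    refine ⟨⟨⟨g', g, hg'g, hgg'⟩, rfl⟩, ?_, ?_⟩
    · calc W.comul g' = W.comul (1 * g') := by rw [one_mul]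
        _ = (((1:H) * 1) ⊗ₜ[k] ((1:H) * 1)) * W.comul 1 * W.comul g' := by
              rw [W.comul_mul, mul_one, ← Algebra.TensorProduct.one_def, one_mul]
        _ = ((g' * g) ⊗ₜ[k] (g' * g)) * W.comul 1 * W.comul g' := by rw [hg'g, one_mul]
        _ = (g' ⊗ₜ[k] g') * ((g ⊗ₜ[k] g) * W.comul 1) * W.comul g' := by
              rw [← Algebra.TensorProduct.tmul_mul_tmul, mul_assoc]; simp only [mul_assoc]
        _ = (g' ⊗ₜ[k] g') * W.comul (g * g') := by
              rw [← hg1, mul_assoc, W.comul_mul]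
        _ = (g' ⊗ₜ[k] g') * W.comul 1 := by rw [hgg']
    · calc W.comul g' = W.comul (g' * 1) := by rw [mul_one]
        _ = W.comul g' * W.comul 1 * (((1:H) * 1) ⊗ₜ[k] ((1:H) * 1)) := by
              rw [W.comul_mul, mul_one, ← Algebra.TensorProduct.one_def, mul_one]
        _ = W.comul g' * W.comul 1 * ((g * g') ⊗ₜ[k] (g * g')) := by rw [hgg', one_mul]
        _ = W.comul g' * (W.comul 1 * (g ⊗ₜ[k] g)) * (g' ⊗ₜ[k] g') := by
              rw [← Algebra.TensorProduct.tmul_mul_tmul, mul_assoc]; simp only [mul_assoc]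
        _ = W.comul (g' * g) * (g' ⊗ₜ[k] g') := by
              rw [← hg2, ← W.comul_mul]
        _ = W.comul 1 * (g' ⊗ₜ[k] g') := by rw [hg'g]
end

section
/- For any group-like element g of a weak Hopf algebra H, conjugation h ↦ g h g⁻¹ is an automorphism of H as a weak Hopf algebra; in particular it is a coalgebra map: Δ(ghg⁻¹) = (g⊗g)Δ(h)(g⁻¹⊗g⁻¹). -/
open TensorProduct

namespace WeakHopfConj

open TensorProduct LinearMap

variable {k H : Type*} [Field k] [Ring H] [Algebra k H]

private lemma comul_one_sq (W : WeakHopf k H) : W.comul 1 * W.comul 1 = W.comul 1 := by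
  rw [← W.comul_mul, one_mul]

section

variable (W : WeakHopf k H) {g g' : H} (hg : W.IsGroupLike g)
  (hgg' : g * g' = 1) (hg'g : g' * g = 1)

include hg hgg' hg'g

private lemma comul_inv_l : W.comul g' = (g' ⊗ₜ[k] g') * W.comul 1 := by
  have e1 : (g' ⊗ₜ[k] g') * W.comul g = W.comul 1 := by
    rw [hg.2.1, ← mul_assoc, Algebra.TensorProduct.tmul_mul_tmul, hg'g,
      ← Algebra.TensorProduct.one_def, one_mul]
  calc W.comul g' = W.comul 1 * W.comul g' := by rw [← W.comul_mul, one_mul]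
    _ = (g' ⊗ₜ[k] g') * (W.comul g * W.comul g') := by rw [← e1, mul_assoc]
    _ = (g' ⊗ₜ[k] g') * W.comul 1 := by rw [← W.comul_mul, hgg']

private lemma comul_inv_r : W.comul g' = W.comul 1 * (g' ⊗ₜ[k] g') := by
  have e1 : W.comul g * (g' ⊗ₜ[k] g') = W.comul 1 := by
    rw [hg.2.2, mul_assoc, Algebra.TensorProduct.tmul_mul_tmul, hgg',
      ← Algebra.TensorProduct.one_def, mul_one]
  calc W.comul g' = W.comul g' * W.comul 1 := by rw [← W.comul_mul, mul_one]
    _ = (W.comul g' * W.comul g) * (g' ⊗ₜ[k] g') := by rw [← e1, mul_assoc]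
    _ = W.comul 1 * (g' ⊗ₜ[k] g') := by rw [← W.comul_mul, hg'g]

private lemma comul_one_conj :
    (g ⊗ₜ[k] g) * W.comul 1 * (g' ⊗ₜ[k] g') = W.comul 1 := by
  conv_lhs => rw [← comul_one_sq W]
  rw [← mul_assoc (g ⊗ₜ[k] g) (W.comul 1) (W.comul 1),
    mul_assoc ((g ⊗ₜ[k] g) * W.comul 1), ← hg.2.1,
    ← comul_inv_r W hg hgg' hg'g, ← W.comul_mul, hgg']

private lemma comul_conj (a : H) :
    W.comul (g * a * g') = (g ⊗ₜ[k] g) * W.comul a * (g' ⊗ₜ[k] g') := by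
  calc W.comul (g * a * g') = W.comul g * W.comul a * W.comul g' := by
        rw [W.comul_mul, W.comul_mul]
    _ = ((g ⊗ₜ[k] g) * (W.comul 1 * W.comul a)) * (W.comul 1 * (g' ⊗ₜ[k] g')) := by
        rw [hg.2.1, ← comul_inv_r W hg hgg' hg'g, mul_assoc (g ⊗ₜ[k] g)]
    _ = ((g ⊗ₜ[k] g) * W.comul a) * (W.comul 1 * (g' ⊗ₜ[k] g')) := by
        rw [← W.comul_mul, one_mul]
    _ = (g ⊗ₜ[k] g) * (W.comul a * W.comul 1) * (g' ⊗ₜ[k] g') := by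
        rw [mul_assoc, mul_assoc, mul_assoc]
    _ = (g ⊗ₜ[k] g) * W.comul a * (g' ⊗ₜ[k] g') := by
        rw [← W.comul_mul, mul_one]

/-- ε(g·x) = ε(x). -/
private lemma counit_g_mul (x : H) : W.counit (g * x) = W.counit x := by
  have hax := W.weak_counit_left g' g x
  rw [hg'g, one_mul, hg.2.1] at hax
  have key : ∀ t : H ⊗[k] H,
      (TensorProduct.lid k k)
        ((TensorProduct.map (W.counit ∘ₗ mulLeft k g') (W.counit ∘ₗ mulRight k x))
          ((g ⊗ₜ[k] g) * t)) =
      W.counit (g * ((TensorProduct.lid k H)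
        ((TensorProduct.map W.counit LinearMap.id) t)) * x) := by
    intro t
    induction t using TensorProduct.induction_on with
    | zero => simp
    | tmul u v =>
        simp only [Algebra.TensorProduct.tmul_mul_tmul, map_tmul, comp_apply,
          mulLeft_apply, mulRight_apply, lid_tmul, id_coe, id_eq, smul_eq_mul]
        rw [← mul_assoc g', hg'g, one_mul, mul_smul_comm, smul_mul_assoc, map_smul,
          smul_eq_mul]
    | add t1 t2 h1 h2 => simp [mul_add, add_mul, h1, h2]
  rw [key (W.comul 1), W.counit_comul 1, mul_one] at hax
  exact hax.symm

/-- ε(g'·x) = ε(x). -/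
private lemma counit_g'_mul (x : H) : W.counit (g' * x) = W.counit x := by
  have hax := W.weak_counit_left g g' x
  rw [hgg', one_mul, comul_inv_l W hg hgg' hg'g] at hax
  have key : ∀ t : H ⊗[k] H,
      (TensorProduct.lid k k)
        ((TensorProduct.map (W.counit ∘ₗ mulLeft k g) (W.counit ∘ₗ mulRight k x))
          ((g' ⊗ₜ[k] g') * t)) =
      W.counit (g' * ((TensorProduct.lid k H)
        ((TensorProduct.map W.counit LinearMap.id) t)) * x) := by
    intro t
    induction t using TensorProduct.induction_on with
    | zero => simp
    | tmul u v =>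
        simp only [Algebra.TensorProduct.tmul_mul_tmul, map_tmul, comp_apply,
          mulLeft_apply, mulRight_apply, lid_tmul, id_coe, id_eq, smul_eq_mul]
        rw [← mul_assoc g, hgg', one_mul, mul_smul_comm, smul_mul_assoc, map_smul,
          smul_eq_mul]
    | add t1 t2 h1 h2 => simp [mul_add, add_mul, h1, h2]
  rw [key (W.comul 1), W.counit_comul 1, mul_one] at hax
  exact hax.symm

/-- ε(x·g') = ε(x). -/
private lemma counit_mul_g' (x : H) : W.counit (x * g') = W.counit x := by
  have hax := W.weak_counit_left x g' g
  rw [mul_assoc, hg'g, mul_one, comul_inv_r W hg hgg' hg'g] at hax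
  have key : ∀ t : H ⊗[k] H,
      (TensorProduct.lid k k)
        ((TensorProduct.map (W.counit ∘ₗ mulLeft k x) (W.counit ∘ₗ mulRight k g))
          (t * (g' ⊗ₜ[k] g'))) =
      W.counit (x * ((TensorProduct.rid k H)
        ((TensorProduct.map LinearMap.id W.counit) t)) * g') := by
    intro t
    induction t using TensorProduct.induction_on with
    | zero => simp
    | tmul u v =>
        simp only [Algebra.TensorProduct.tmul_mul_tmul, map_tmul, comp_apply,
          mulLeft_apply, mulRight_apply, rid_tmul, id_coe, id_eq, lid_tmul, smul_eq_mul]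
        rw [mul_assoc v, hg'g, mul_one, ← mul_assoc x, mul_smul_comm, smul_mul_assoc,
          map_smul, smul_eq_mul]
        ring
    | add t1 t2 h1 h2 => simp [mul_add, add_mul, h1, h2]
  rw [key (W.comul 1), W.comul_counit 1, mul_one] at hax
  exact hax.symm

/-- ε(x·g) = ε(x). -/
private lemma counit_mul_g (x : H) : W.counit (x * g) = W.counit x := by
  have hax := W.weak_counit_left x g g'
  rw [mul_assoc, hgg', mul_one, hg.2.2] at hax
  have key : ∀ t : H ⊗[k] H,
      (TensorProduct.lid k k)
        ((TensorProduct.map (W.counit ∘ₗ mulLeft k x) (W.counit ∘ₗ mulRight k g'))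
          (t * (g ⊗ₜ[k] g))) =
      W.counit (x * ((TensorProduct.rid k H)
        ((TensorProduct.map LinearMap.id W.counit) t)) * g) := by
    intro t
    induction t using TensorProduct.induction_on with
    | zero => simp
    | tmul u v =>
        simp only [Algebra.TensorProduct.tmul_mul_tmul, map_tmul, comp_apply,
          mulLeft_apply, mulRight_apply, rid_tmul, id_coe, id_eq, lid_tmul, smul_eq_mul]
        rw [mul_assoc v, hgg', mul_one, ← mul_assoc x, mul_smul_comm, smul_mul_assoc,
          map_smul, smul_eq_mul]
        ring
    | add t1 t2 h1 h2 => simp [mul_add, add_mul, h1, h2]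
  rw [key (W.comul 1), W.comul_counit 1, mul_one] at hax
  exact hax.symm

/-- ε_s equivariance: Σ 1₁ ε(a 1₂) = g (Σ 1₁ ε((g'ag) 1₂)) g'. -/
private lemma Es_equiv (a : H) :
    (TensorProduct.rid k H)
      ((TensorProduct.map LinearMap.id (W.counit ∘ₗ mulLeft k a)) (W.comul 1)) =
    g * (TensorProduct.rid k H)
      ((TensorProduct.map LinearMap.id (W.counit ∘ₗ mulLeft k (g' * a * g)))
        (W.comul 1)) * g' := by
  have key : ∀ t : H ⊗[k] H,
      (TensorProduct.rid k H)
        ((TensorProduct.map LinearMap.id (W.counit ∘ₗ mulLeft k a))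
          ((g ⊗ₜ[k] g) * t * (g' ⊗ₜ[k] g'))) =
      g * (TensorProduct.rid k H)
        ((TensorProduct.map LinearMap.id (W.counit ∘ₗ mulLeft k (g' * a * g))) t) * g' := by
    intro t
    induction t using TensorProduct.induction_on with
    | zero => simp
    | tmul u v =>
        simp only [Algebra.TensorProduct.tmul_mul_tmul, map_tmul, comp_apply,
          mulLeft_apply, rid_tmul, id_coe, id_eq]
        rw [mul_smul_comm, smul_mul_assoc]
        congr 1
        rw [← mul_assoc a, counit_mul_g' W hg hgg' hg'g, ← mul_assoc a,
          mul_assoc g' a g, mul_assoc g' (a * g) v, counit_g'_mul W hg hgg' hg'g]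
    | add t1 t2 h1 h2 => simp [mul_add, add_mul, h1, h2]
  conv_lhs => rw [← comul_one_conj W hg hgg' hg'g]
  exact key (W.comul 1)

/-- ε_t equivariance: Σ ε(1₁ a) 1₂ = g (Σ ε(1₁ (g'ag)) 1₂) g'. -/
private lemma Et_equiv (a : H) :
    (TensorProduct.lid k H)
      ((TensorProduct.map (W.counit ∘ₗ mulRight k a) LinearMap.id) (W.comul 1)) =
    g * (TensorProduct.lid k H)
      ((TensorProduct.map (W.counit ∘ₗ mulRight k (g' * a * g)) LinearMap.id)
        (W.comul 1)) * g' := by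
  have key : ∀ t : H ⊗[k] H,
      (TensorProduct.lid k H)
        ((TensorProduct.map (W.counit ∘ₗ mulRight k a) LinearMap.id)
          ((g ⊗ₜ[k] g) * t * (g' ⊗ₜ[k] g'))) =
      g * (TensorProduct.lid k H)
        ((TensorProduct.map (W.counit ∘ₗ mulRight k (g' * a * g)) LinearMap.id) t) * g' := by
    intro t
    induction t using TensorProduct.induction_on with
    | zero => simp
    | tmul u v =>
        simp only [Algebra.TensorProduct.tmul_mul_tmul, map_tmul, comp_apply,
          mulRight_apply, lid_tmul, id_coe, id_eq]
        rw [mul_smul_comm, smul_mul_assoc]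
        congr 1
        rw [mul_assoc (g * u), mul_assoc g u, counit_g_mul W hg hgg' hg'g,
          ← mul_assoc u (g' * a) g, counit_mul_g W hg hgg' hg'g]
    | add t1 t2 h1 h2 => simp [mul_add, add_mul, h1, h2]
  conv_lhs => rw [← comul_one_conj W hg hgg' hg'g]
  exact key (W.comul 1)

end

/-- cancellation lemmas -/
private lemma cl {g g' : H} (hg'g : g' * g = 1) : ∀ x : H, g' * (g * x) = x :=
  fun x => by rw [← mul_assoc, hg'g, one_mul]

private lemma cl' {g g' : H} (hgg' : g * g' = 1) : ∀ x : H, g * (g' * x) = x :=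
  fun x => by rw [← mul_assoc, hgg', one_mul]

private lemma cr {g g' : H} (hg'g : g' * g = 1) : ∀ x : H, x * g' * g = x :=
  fun x => by rw [mul_assoc, hg'g, mul_one]

private lemma cr' {g g' : H} (hgg' : g * g' = 1) : ∀ x : H, x * g * g' = x :=
  fun x => by rw [mul_assoc, hgg', mul_one]

private lemma conj_sand {g g' : H} (hgg' : g * g' = 1) (hg'g : g' * g = 1) :
    ∀ a : H, g' * (g * a * g') * g = a := fun a => by
  rw [← mul_assoc g' (g * a) g', cl hg'g, cr hg'g]

private lemma conj_sand' {g g' : H} (hgg' : g * g' = 1) (hg'g : g' * g = 1) :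
    ∀ a : H, g * (g' * a * g) * g' = a := fun a => by
  rw [← mul_assoc g (g' * a) g, cl' hgg', cr' hgg']

private lemma conj_mul {g g' : H} (hgg' : g * g' = 1) (hg'g : g' * g = 1) :
    ∀ p q : H, (g * p * g') * (g * q * g') = g * (p * q) * g' := fun p q => by
  rw [mul_assoc (g * p) g' (g * q * g'), ← mul_assoc g' (g * q) g', cl hg'g,
    ← mul_assoc (g * p) q g', mul_assoc g p q]

/-- the candidate conjugated antipode T(a) = g S(g' a g) g'. -/
private noncomputable def Tm (W : WeakHopf k H) (g g' : H) : H →ₗ[k] H :=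
  mulRight k g' ∘ₗ mulLeft k g ∘ₗ W.antipode ∘ₗ mulRight k g ∘ₗ mulLeft k g'

private lemma Tm_apply (W : WeakHopf k H) (g g' a : H) :
    Tm W g g' a = g * W.antipode (g' * a * g) * g' := by
  simp [Tm, LinearMap.mulRight_apply, LinearMap.mulLeft_apply]

/-- composing a map with Δ on a tensor leg. -/
private lemma compdownL (W : WeakHopf k H) (A : H ⊗[k] H →ₗ[k] H) (B : H →ₗ[k] H)
    (x : H ⊗[k] H) :
    (TensorProduct.map (A ∘ₗ W.comul) B) x =
      (TensorProduct.map A B) ((TensorProduct.map W.comul LinearMap.id) x) := by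
  rw [show TensorProduct.map (A ∘ₗ W.comul) B =
      (TensorProduct.map A B) ∘ₗ (TensorProduct.map W.comul LinearMap.id) by
    rw [← TensorProduct.map_comp, LinearMap.comp_id]]
  rfl

private lemma compdownR (W : WeakHopf k H) (A : H ⊗[k] H →ₗ[k] H) (B : H →ₗ[k] H)
    (x : H ⊗[k] H) :
    (TensorProduct.map B (A ∘ₗ W.comul)) x =
      (TensorProduct.map B A) ((TensorProduct.map LinearMap.id W.comul) x) := by
  rw [show TensorProduct.map B (A ∘ₗ W.comul) =
      (TensorProduct.map B A) ∘ₗ (TensorProduct.map LinearMap.id W.comul) by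
    rw [← TensorProduct.map_comp, LinearMap.comp_id]]
  rfl

/-- associativity of the convolution product. -/
private lemma convAssoc (W : WeakHopf k H) (f₁ f₂ f₃ : H →ₗ[k] H) (h : H) :
    mul' k H ((TensorProduct.map ((mul' k H ∘ₗ TensorProduct.map f₁ f₂) ∘ₗ W.comul) f₃)
      (W.comul h)) =
    mul' k H ((TensorProduct.map f₁ ((mul' k H ∘ₗ TensorProduct.map f₂ f₃) ∘ₗ W.comul))
      (W.comul h)) := by
  rw [compdownL, compdownR, ← W.coassoc h]
  have key : ∀ u : (H ⊗[k] H) ⊗[k] H,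
      mul' k H ((TensorProduct.map (mul' k H ∘ₗ TensorProduct.map f₁ f₂) f₃) u) =
      mul' k H ((TensorProduct.map f₁ (mul' k H ∘ₗ TensorProduct.map f₂ f₃))
        ((TensorProduct.assoc k H H H).toLinearMap u)) := by
    intro u
    induction u using TensorProduct.induction_on with
    | zero => simp only [map_zero]
    | tmul x c =>
        induction x using TensorProduct.induction_on with
        | zero => simp only [zero_tmul, map_zero]
        | tmul a b => simp [mul_assoc]
        | add x1 x2 h1 h2 => simp only [add_tmul, map_add, h1, h2]
    | add u1 u2 h1 h2 => simp only [map_add, h1, h2]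
  exact key _

section

variable (W : WeakHopf k H) {g g' : H} (hg : W.IsGroupLike g)
  (hgg' : g * g' = 1) (hg'g : g' * g = 1)

include hg hgg' hg'g

private lemma Tm_conj (a : H) : Tm W g g' (g * a * g') = g * W.antipode a * g' := by
  rw [Tm_apply, conj_sand hgg' hg'g]

/-- Δ(h) = (g⊗g) Δ(g'hg) (g'⊗g'). -/
private lemma comul_unconj (h : H) :
    W.comul h = (g ⊗ₜ[k] g) * W.comul (g' * h * g) * (g' ⊗ₜ[k] g') := by
  conv_lhs => rw [← conj_sand' hgg' hg'g h, comul_conj W hg hgg' hg'g]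

private lemma C1 : ∀ t : H ⊗[k] H,
    mul' k H ((TensorProduct.map (Tm W g g') LinearMap.id)
      ((g ⊗ₜ[k] g) * t * (g' ⊗ₜ[k] g'))) =
    g * mul' k H ((TensorProduct.map W.antipode LinearMap.id) t) * g' := by
  intro t
  induction t using TensorProduct.induction_on with
  | zero => simp
  | tmul u v =>
      simp only [Algebra.TensorProduct.tmul_mul_tmul, map_tmul, mul'_apply,
        id_coe, id_eq]
      rw [Tm_conj W hg hgg' hg'g, conj_mul hgg' hg'g]
  | add t1 t2 h1 h2 => simp [mul_add, add_mul, h1, h2]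

private lemma C2 : ∀ t : H ⊗[k] H,
    mul' k H ((TensorProduct.map LinearMap.id (Tm W g g'))
      ((g ⊗ₜ[k] g) * t * (g' ⊗ₜ[k] g'))) =
    g * mul' k H ((TensorProduct.map LinearMap.id W.antipode) t) * g' := by
  intro t
  induction t using TensorProduct.induction_on with
  | zero => simp
  | tmul u v =>
      simp only [Algebra.TensorProduct.tmul_mul_tmul, map_tmul, mul'_apply,
        id_coe, id_eq]
      rw [Tm_conj W hg hgg' hg'g, conj_mul hgg' hg'g]
  | add t1 t2 h1 h2 => simp [mul_add, add_mul, h1, h2]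

private lemma mapDelta_conj : ∀ t : H ⊗[k] H,
    (TensorProduct.map W.comul LinearMap.id) ((g ⊗ₜ[k] g) * t * (g' ⊗ₜ[k] g')) =
    ((g ⊗ₜ[k] g) ⊗ₜ[k] g) * ((TensorProduct.map W.comul LinearMap.id) t) *
      ((g' ⊗ₜ[k] g') ⊗ₜ[k] g') := by
  intro t
  induction t using TensorProduct.induction_on with
  | zero => simp
  | tmul u v =>
      simp only [Algebra.TensorProduct.tmul_mul_tmul, map_tmul, id_coe, id_eq]
      rw [comul_conj W hg hgg' hg'g]
  | add t1 t2 h1 h2 => simp [mul_add, add_mul, h1, h2]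

private lemma C3 : ∀ u : (H ⊗[k] H) ⊗[k] H,
    mul' k H ((TensorProduct.map
        (mul' k H ∘ₗ TensorProduct.map (Tm W g g') LinearMap.id) (Tm W g g'))
      (((g ⊗ₜ[k] g) ⊗ₜ[k] g) * u * ((g' ⊗ₜ[k] g') ⊗ₜ[k] g'))) =
    g * mul' k H ((TensorProduct.map
        (mul' k H ∘ₗ TensorProduct.map W.antipode LinearMap.id) W.antipode) u) * g' := by
  intro u
  induction u using TensorProduct.induction_on with
  | zero => simp
  | tmul x c =>
      induction x using TensorProduct.induction_on with
      | zero => simp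
      | tmul a b =>
          simp only [Algebra.TensorProduct.tmul_mul_tmul, map_tmul, mul'_apply,
            comp_apply, id_coe, id_eq]
          rw [Tm_conj W hg hgg' hg'g, Tm_conj W hg hgg' hg'g,
            conj_mul hgg' hg'g, conj_mul hgg' hg'g]
      | add x1 x2 h1 h2 =>
          simp only [add_tmul, mul_add, add_mul, map_add]
          rw [h1, h2]
  | add u1 u2 h1 h2 => simp [mul_add, add_mul, h1, h2]

private lemma conv_ST_left :
    (mul' k H ∘ₗ TensorProduct.map W.antipode LinearMap.id) ∘ₗ W.comul =
    (mul' k H ∘ₗ TensorProduct.map (Tm W g g') LinearMap.id) ∘ₗ W.comul := by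
  ext h
  simp only [comp_apply]
  rw [W.antipode_left h, comul_unconj W hg hgg' hg'g h, C1 W hg hgg' hg'g,
    W.antipode_left (g' * h * g)]
  exact Es_equiv W hg hgg' hg'g h

private lemma conv_ST_right :
    (mul' k H ∘ₗ TensorProduct.map LinearMap.id W.antipode) ∘ₗ W.comul =
    (mul' k H ∘ₗ TensorProduct.map LinearMap.id (Tm W g g')) ∘ₗ W.comul := by
  ext h
  simp only [comp_apply]
  rw [W.antipode_right h, comul_unconj W hg hgg' hg'g h, C2 W hg hgg' hg'g,
    W.antipode_right (g' * h * g)]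
  exact Et_equiv W hg hgg' hg'g h

private lemma Tm_mid (h : H) :
    mul' k H ((TensorProduct.map
        ((mul' k H ∘ₗ TensorProduct.map (Tm W g g') LinearMap.id) ∘ₗ W.comul)
        (Tm W g g')) (W.comul h)) = Tm W g g' h := by
  rw [compdownL, comul_unconj W hg hgg' hg'g h, mapDelta_conj W hg hgg' hg'g,
    C3 W hg hgg' hg'g, W.antipode_mid (g' * h * g)]
  exact (Tm_apply W g g' h).symm

private lemma antipode_eq_Tm (h : H) : W.antipode h = Tm W g g' h := by
  have mid' : mul' k H ((TensorProduct.map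
      ((mul' k H ∘ₗ TensorProduct.map W.antipode LinearMap.id) ∘ₗ W.comul)
      W.antipode) (W.comul h)) = W.antipode h := by
    rw [compdownL]
    exact W.antipode_mid h
  calc W.antipode h
      = mul' k H ((TensorProduct.map
          ((mul' k H ∘ₗ TensorProduct.map W.antipode LinearMap.id) ∘ₗ W.comul)
          W.antipode) (W.comul h)) := mid'.symm
    _ = mul' k H ((TensorProduct.map
          ((mul' k H ∘ₗ TensorProduct.map (Tm W g g') LinearMap.id) ∘ₗ W.comul)
          W.antipode) (W.comul h)) := by rw [conv_ST_left W hg hgg' hg'g]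
    _ = mul' k H ((TensorProduct.map (Tm W g g')
          ((mul' k H ∘ₗ TensorProduct.map LinearMap.id W.antipode) ∘ₗ W.comul))
          (W.comul h)) := convAssoc W (Tm W g g') LinearMap.id W.antipode h
    _ = mul' k H ((TensorProduct.map (Tm W g g')
          ((mul' k H ∘ₗ TensorProduct.map LinearMap.id (Tm W g g')) ∘ₗ W.comul))
          (W.comul h)) := by rw [conv_ST_right W hg hgg' hg'g]
    _ = mul' k H ((TensorProduct.map
          ((mul' k H ∘ₗ TensorProduct.map (Tm W g g') LinearMap.id) ∘ₗ W.comul)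
          (Tm W g g')) (W.comul h)) :=
        (convAssoc W (Tm W g g') LinearMap.id (Tm W g g') h).symm
    _ = Tm W g g' h := Tm_mid W hg hgg' hg'g h

private lemma antipode_conj (h : H) :
    W.antipode (g * h * g') = g * W.antipode h * g' := by
  rw [antipode_eq_Tm W hg hgg' hg'g (g * h * g'), Tm_apply, conj_sand hgg' hg'g]

end


end WeakHopfConj

open TensorProduct in
/-- Conjugation by a group-like element is a weak Hopf algebra
automorphism; in particular Δ(ghg⁻¹) = (g⊗g)Δ(h)(g⁻¹⊗g⁻¹). -/
theorem weakHopf_groupLike_conjugation {k H : Type*} [Field k] [Ring H] [Algebra k H]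
    (W : WeakHopf k H) (g g' : H) (hg : W.IsGroupLike g)
    (hgg' : g * g' = 1) (hg'g : g' * g = 1) :
    Function.Bijective (fun h : H => g * h * g') ∧
    (∀ c : k, ∀ a b : H, g * (c • a + b) * g' = c • (g * a * g') + g * b * g') ∧
    (∀ a b : H, g * (a * b) * g' = (g * a * g') * (g * b * g')) ∧
    g * 1 * g' = 1 ∧
    (∀ h : H, W.comul (g * h * g') = (g ⊗ₜ[k] g) * W.comul h * (g' ⊗ₜ[k] g')) ∧
    (∀ h : H, W.counit (g * h * g') = W.counit h) ∧
    (∀ h : H, W.antipode (g * h * g') = g * W.antipode h * g') := by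
  refine ⟨⟨fun a b hab => ?_, fun y => ⟨g' * y * g, WeakHopfConj.conj_sand' hgg' hg'g y⟩⟩,
    fun c a b => by simp [mul_add, add_mul, mul_smul_comm, smul_mul_assoc],
    fun a b => (WeakHopfConj.conj_mul hgg' hg'g a b).symm,
    by rw [mul_one, hgg'],
    fun h => WeakHopfConj.comul_conj W hg hgg' hg'g h,
    fun h => by rw [WeakHopfConj.counit_mul_g' W hg hgg' hg'g,
      WeakHopfConj.counit_g_mul W hg hgg' hg'g],
    fun h => WeakHopfConj.antipode_conj W hg hgg' hg'g h⟩
  have := congrArg (fun x => g' * x * g) hab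
  simpa only [WeakHopfConj.conj_sand hgg' hg'g] using this
end

section
/- For any y ∈ H_s with S²(y) = y and y invertible, the element g = S(y)y⁻¹ is group-like in the weak Hopf algebra H. -/
open TensorProduct

/-!
Elements `x ∈ H_s` and `z ∈ H_t` satisfy `Δx = Δ1 (1 ⊗ x) = (1 ⊗ x) Δ1` and
`Δz = (z ⊗ 1) Δ1 = Δ1 (z ⊗ 1)`, and the axiom `S(h₁)h₂S(h₃) = S(h)` shows `S(H_s) ⊆ H_t`.
Evaluating `(id ⊗ ε_t)Δh = Δ1 (h ⊗ 1)` on `H_s` and `(ε_s ⊗ id)Δh = (1 ⊗ h) Δ1` on `H_t`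
gives the exchange identities `Δ1 (x ⊗ 1) = Δ1 (1 ⊗ S x)` and `(1 ⊗ z) Δ1 = (S z ⊗ 1) Δ1`.

For `g = S(y) y⁻¹` this gives `Δg = (S y ⊗ 1) Δ1 (1 ⊗ y⁻¹)`. The exchange identities, the second
one applied to `z = S y` and combined with `S² y = y`, show that `Δ1` absorbs `y⁻¹ ⊗ S y` from
both sides, which turns `Δg` into `(g ⊗ g) Δ1` and into `Δ1 (g ⊗ g)`. Contracting the first
exchange identity with `ε` gives `S(y⁻¹) S(y) = 1 = S(y) S(y⁻¹)`, so `g` is invertible.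
-/
namespace TensorProduct

variable {R A B C D : Type*} [CommSemiring R] [Semiring A] [Algebra R A] [Semiring B]
  [Algebra R B] [Semiring C] [Algebra R C] [Semiring D] [Algebra R D]

lemma map_mul_of_map_mul {f : A →ₗ[R] B} {g : C →ₗ[R] D}
    (hf : ∀ a b, f (a * b) = f a * f b) (hg : ∀ a b, g (a * b) = g a * g b) (u v : A ⊗[R] C) :
    map f g (u * v) = map f g u * map f g v := by
  induction u using TensorProduct.induction_on with
  | zero => simp
  | add u₁ u₂ h₁ h₂ => simp only [add_mul, map_add, h₁, h₂]
  | tmul a c =>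
    induction v using TensorProduct.induction_on with
    | zero => simp
    | add v₁ v₂ h₁ h₂ => simp only [mul_add, map_add, h₁, h₂]
    | tmul b d => simp [hf, hg]

lemma assoc_mul (u v : (A ⊗[R] B) ⊗[R] C) :
    TensorProduct.assoc R A B C (u * v) =
      TensorProduct.assoc R A B C u * TensorProduct.assoc R A B C v :=
  map_mul (Algebra.TensorProduct.assoc R R R A B C) u v

lemma assoc_symm_mul (u v : A ⊗[R] (B ⊗[R] C)) :
    (TensorProduct.assoc R A B C).symm (u * v) =
      (TensorProduct.assoc R A B C).symm u * (TensorProduct.assoc R A B C).symm v :=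
  map_mul (Algebra.TensorProduct.assoc R R R A B C).symm u v

lemma rid_map_tmul_one_mul_assoc_symm (φ : C →ₗ[R] R) (w : A ⊗[R] B) (u : B ⊗[R] C) :
    TensorProduct.rid R (A ⊗[R] B)
        (map LinearMap.id φ ((w ⊗ₜ[R] 1) * (TensorProduct.assoc R A B C).symm (1 ⊗ₜ u))) =
      w * (1 ⊗ₜ TensorProduct.rid R B (map LinearMap.id φ u)) := by
  induction u using TensorProduct.induction_on with
  | zero => simp
  | add u₁ u₂ h₁ h₂ => simp only [tmul_add, map_add, mul_add, h₁, h₂]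
  | tmul b c => simp [tmul_smul]

lemma rid_map_assoc_symm_mul_tmul_one (φ : C →ₗ[R] R) (w : A ⊗[R] B) (u : B ⊗[R] C) :
    TensorProduct.rid R (A ⊗[R] B)
        (map LinearMap.id φ ((TensorProduct.assoc R A B C).symm (1 ⊗ₜ u) * (w ⊗ₜ[R] 1))) =
      (1 ⊗ₜ TensorProduct.rid R B (map LinearMap.id φ u)) * w := by
  induction u using TensorProduct.induction_on with
  | zero => simp
  | add u₁ u₂ h₁ h₂ => simp only [tmul_add, map_add, add_mul, h₁, h₂]
  | tmul b c => simp [tmul_smul]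

lemma lid_map_assoc_tmul_one_mul (φ : A →ₗ[R] R) (u : A ⊗[R] B) (w : B ⊗[R] C) :
    TensorProduct.lid R (B ⊗[R] C)
        (map φ LinearMap.id (TensorProduct.assoc R A B C (u ⊗ₜ[R] 1) * (1 ⊗ₜ w))) =
      (TensorProduct.lid R B (map φ LinearMap.id u) ⊗ₜ 1) * w := by
  induction u using TensorProduct.induction_on with
  | zero => simp
  | add u₁ u₂ h₁ h₂ => simp only [add_tmul, map_add, add_mul, h₁, h₂]
  | tmul a b => simp [← smul_tmul']

lemma lid_map_one_tmul_mul_assoc (φ : A →ₗ[R] R) (u : A ⊗[R] B) (w : B ⊗[R] C) :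
    TensorProduct.lid R (B ⊗[R] C)
        (map φ LinearMap.id ((1 ⊗ₜ w) * TensorProduct.assoc R A B C (u ⊗ₜ[R] 1))) =
      w * (TensorProduct.lid R B (map φ LinearMap.id u) ⊗ₜ 1) := by
  induction u using TensorProduct.induction_on with
  | zero => simp
  | add u₁ u₂ h₁ h₂ => simp only [add_tmul, map_add, mul_add, h₁, h₂]
  | tmul a b => simp [← smul_tmul']

lemma lid_map_mul_one_tmul (φ : A →ₗ[R] R) (u : A ⊗[R] B) (b : B) :
    TensorProduct.lid R B (map φ LinearMap.id (u * (1 ⊗ₜ b))) =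
      TensorProduct.lid R B (map φ LinearMap.id u) * b := by
  induction u using TensorProduct.induction_on with
  | zero => simp
  | add u₁ u₂ h₁ h₂ => simp only [add_mul, map_add, h₁, h₂]
  | tmul a b' => simp

lemma apply_rid_map_id (f : A →ₗ[R] B) (φ : C →ₗ[R] R) (u : A ⊗[R] C) :
    f (TensorProduct.rid R A (map LinearMap.id φ u)) =
      TensorProduct.rid R B (map LinearMap.id φ (map f LinearMap.id u)) := by
  induction u using TensorProduct.induction_on with
  | zero => simp
  | add u v hu hv => simp only [map_add, hu, hv]
  | tmul a c => simp

lemma apply_lid_map_id (f : B →ₗ[R] C) (φ : A →ₗ[R] R) (u : A ⊗[R] B) :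
    f (TensorProduct.lid R B (map φ LinearMap.id u)) =
      TensorProduct.lid R C (map φ LinearMap.id (map LinearMap.id f u)) := by
  induction u using TensorProduct.induction_on with
  | zero => simp
  | add u v hu hv => simp only [map_add, hu, hv]
  | tmul a b => simp

lemma map_id_lid_assoc_tmul (φ : B →ₗ[R] R) (u : A ⊗[R] B) (c : C) :
    map LinearMap.id ((TensorProduct.lid R C).toLinearMap ∘ₗ map φ LinearMap.id)
        (TensorProduct.assoc R A B C (u ⊗ₜ c)) =
      TensorProduct.rid R A (map LinearMap.id φ u) ⊗ₜ c := by
  induction u using TensorProduct.induction_on with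
  | zero => simp
  | add u v hu hv => simp only [add_tmul, map_add, hu, hv]
  | tmul a b => simp [smul_tmul']

lemma map_rid_id_assoc_symm_tmul (φ : B →ₗ[R] R) (a : A) (u : B ⊗[R] C) :
    map ((TensorProduct.rid R A).toLinearMap ∘ₗ map LinearMap.id φ) LinearMap.id
        ((TensorProduct.assoc R A B C).symm (a ⊗ₜ u)) =
      a ⊗ₜ TensorProduct.lid R C (map φ LinearMap.id u) := by
  induction u using TensorProduct.induction_on with
  | zero => simp
  | add u v hu hv => simp only [tmul_add, map_add, hu, hv]
  | tmul b c => simp [smul_tmul']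

end TensorProduct

namespace WeakHopf

variable {k H : Type*} [Field k] [Ring H] [Algebra k H] (W : WeakHopf k H)

noncomputable def mulAntipode : H ⊗[k] H →ₗ[k] H :=
  LinearMap.mul' k H ∘ₗ map LinearMap.id W.antipode

noncomputable def antipodeMul : H ⊗[k] H →ₗ[k] H :=
  LinearMap.mul' k H ∘ₗ map W.antipode LinearMap.id

@[simp] lemma mulAntipode_tmul (a b : H) : W.mulAntipode (a ⊗ₜ b) = a * W.antipode b := rfl

@[simp] lemma antipodeMul_tmul (a b : H) : W.antipodeMul (a ⊗ₜ b) = W.antipode a * b := rfl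

lemma εsL_apply (h : H) :
    W.εsL h = TensorProduct.rid k H
      (map LinearMap.id (W.counit ∘ₗ LinearMap.mulLeft k h) (W.comul 1)) := by
  simp only [εsL, LinearMap.comp_apply, TensorProduct.mk_apply, LinearEquiv.coe_coe]
  generalize W.comul 1 = u
  induction u using TensorProduct.induction_on with
  | zero => simp
  | add u v hu hv => simp only [add_tmul, map_add, hu, hv]
  | tmul a b => simp

lemma εtL_apply (h : H) :
    W.εtL h = TensorProduct.lid k H
      (map (W.counit ∘ₗ LinearMap.mulRight k h) LinearMap.id (W.comul 1)) := by
  simp only [εtL, LinearMap.comp_apply, LinearMap.flip_apply, TensorProduct.mk_apply,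
    LinearEquiv.coe_coe]
  generalize W.comul 1 = u
  induction u using TensorProduct.induction_on with
  | zero => simp
  | add u v hu hv => simp only [tmul_add, map_add, hu, hv]
  | tmul a b => simp

lemma antipodeMul_comul (h : H) : W.antipodeMul (W.comul h) = W.εsL h :=
  (W.antipode_left h).trans (W.εsL_apply h).symm

lemma mulAntipode_comul (h : H) : W.mulAntipode (W.comul h) = W.εtL h :=
  (W.antipode_right h).trans (W.εtL_apply h).symm

lemma εsL_one : W.εsL 1 = 1 := by
  rw [εsL_apply, LinearMap.mulLeft_one, LinearMap.comp_id]
  exact W.comul_counit 1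

lemma εtL_one : W.εtL 1 = 1 := by
  rw [εtL_apply, LinearMap.mulRight_one, LinearMap.comp_id]
  exact W.counit_comul 1

lemma comul_one_mul_comul (h : H) : W.comul 1 * W.comul h = W.comul h := by
  rw [← W.comul_mul, one_mul]

lemma comul_mul_comul_one (h : H) : W.comul h * W.comul 1 = W.comul h := by
  rw [← W.comul_mul, mul_one]

lemma map_comul_id_mul (u v : H ⊗[k] H) :
    map W.comul LinearMap.id (u * v) =
      map W.comul LinearMap.id u * map W.comul LinearMap.id v :=
  map_mul_of_map_mul W.comul_mul (fun _ _ => rfl) u v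

lemma map_id_comul_mul (u v : H ⊗[k] H) :
    map LinearMap.id W.comul (u * v) =
      map LinearMap.id W.comul u * map LinearMap.id W.comul v :=
  map_mul_of_map_mul (fun _ _ => rfl) W.comul_mul u v

lemma antipodeMul_mul_one_tmul (u : H ⊗[k] H) (b : H) :
    W.antipodeMul (u * (1 ⊗ₜ b)) = W.antipodeMul u * b := by
  induction u using TensorProduct.induction_on with
  | zero => simp
  | add u v hu hv => rw [add_mul, map_add, hu, hv, map_add, add_mul]
  | tmul a c => simp [mul_assoc]

lemma mulAntipode_tmul_one_mul (a : H) (u : H ⊗[k] H) :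
    W.mulAntipode ((a ⊗ₜ 1) * u) = a * W.mulAntipode u := by
  induction u using TensorProduct.induction_on with
  | zero => simp
  | add u v hu hv => rw [mul_add, map_add, hu, hv, map_add, mul_add]
  | tmul b c => simp [mul_assoc]

lemma map_id_comul_comul_one :
    map LinearMap.id W.comul (W.comul 1) =
      TensorProduct.assoc k H H H (W.comul 1 ⊗ₜ 1) * (1 ⊗ₜ W.comul 1) := by
  rw [← W.coassoc 1, W.weak_unit_left, assoc_mul, LinearEquiv.apply_symm_apply]

lemma map_id_comul_comul_one' :
    map LinearMap.id W.comul (W.comul 1) =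
      (1 ⊗ₜ W.comul 1) * TensorProduct.assoc k H H H (W.comul 1 ⊗ₜ 1) := by
  rw [← W.coassoc 1, W.weak_unit_right, assoc_mul, LinearEquiv.apply_symm_apply]

lemma comul_εsL (h : H) : W.comul (W.εsL h) = W.comul 1 * (1 ⊗ₜ W.εsL h) := by
  rw [εsL_apply, apply_rid_map_id, W.weak_unit_left, rid_map_tmul_one_mul_assoc_symm]

lemma comul_εsL' (h : H) : W.comul (W.εsL h) = (1 ⊗ₜ W.εsL h) * W.comul 1 := by
  rw [εsL_apply, apply_rid_map_id, W.weak_unit_right, rid_map_assoc_symm_mul_tmul_one]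

lemma comul_εtL (h : H) : W.comul (W.εtL h) = (W.εtL h ⊗ₜ 1) * W.comul 1 := by
  rw [εtL_apply, apply_lid_map_id, map_id_comul_comul_one, lid_map_assoc_tmul_one_mul]

lemma comul_εtL' (h : H) : W.comul (W.εtL h) = W.comul 1 * (W.εtL h ⊗ₜ 1) := by
  rw [εtL_apply, apply_lid_map_id, map_id_comul_comul_one', lid_map_one_tmul_mul_assoc]

lemma map_comul_id_comul_εsL (h : H) :
    map W.comul LinearMap.id (W.comul (W.εsL h)) =
      (W.comul 1 ⊗ₜ 1) * (TensorProduct.assoc k H H H).symm (1 ⊗ₜ W.comul (W.εsL h)) := by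
  apply (TensorProduct.assoc k H H H).injective
  rw [W.coassoc, assoc_mul, LinearEquiv.apply_symm_apply]
  conv_lhs => rw [comul_εsL]
  rw [map_id_comul_mul, map_id_comul_comul_one, mul_assoc, map_tmul, LinearMap.id_apply,
    Algebra.TensorProduct.tmul_mul_tmul, one_mul, comul_one_mul_comul]

lemma map_comul_id_comul_εtL (h : H) :
    map W.comul LinearMap.id (W.comul (W.εtL h)) =
      (W.comul (W.εtL h) ⊗ₜ 1) * (TensorProduct.assoc k H H H).symm (1 ⊗ₜ W.comul 1) := by
  conv_lhs => rw [comul_εtL]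
  rw [map_comul_id_mul, map_tmul, LinearMap.id_apply, W.weak_unit_left, ← mul_assoc,
    Algebra.TensorProduct.tmul_mul_tmul, comul_mul_comul_one, mul_one]

lemma mul'_map_antipodeMul_antipode (u w : H ⊗[k] H) :
    LinearMap.mul' k H (map W.antipodeMul W.antipode
        ((u ⊗ₜ 1) * (TensorProduct.assoc k H H H).symm (1 ⊗ₜ w))) =
      W.antipodeMul u * W.mulAntipode w := by
  induction w using TensorProduct.induction_on with
  | zero => simp
  | add v w hv hw => simp only [tmul_add, map_add, mul_add, hv, hw]
  | tmul a b => simp [antipodeMul_mul_one_tmul, mul_assoc]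

lemma antipode_εsL (h : H) : W.antipode (W.εsL h) = W.εtL (W.εsL h) := by
  have mid := W.antipode_mid (W.εsL h)
  change LinearMap.mul' k H (map W.antipodeMul W.antipode _) = _ at mid
  rw [map_comul_id_comul_εsL, mul'_map_antipodeMul_antipode, antipodeMul_comul, εsL_one,
    one_mul, mulAntipode_comul] at mid
  exact mid.symm

lemma antipode_εtL (h : H) : W.antipode (W.εtL h) = W.εsL (W.εtL h) := by
  have mid := W.antipode_mid (W.εtL h)
  change LinearMap.mul' k H (map W.antipodeMul W.antipode _) = _ at mid
  rw [map_comul_id_comul_εtL, mul'_map_antipodeMul_antipode, antipodeMul_comul,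
    mulAntipode_comul, εtL_one, mul_one] at mid
  exact mid.symm

lemma map_id_counit_assoc_map_comul_id (u : H ⊗[k] H) :
    map LinearMap.id ((TensorProduct.lid k H).toLinearMap ∘ₗ map W.counit LinearMap.id)
        (TensorProduct.assoc k H H H (map W.comul LinearMap.id u)) = u := by
  induction u using TensorProduct.induction_on with
  | zero => simp
  | add u v hu hv => simp only [map_add, hu, hv]
  | tmul a b => rw [map_tmul, LinearMap.id_apply, map_id_lid_assoc_tmul, W.comul_counit]

lemma map_counit_id_assoc_symm_map_id_comul (u : H ⊗[k] H) :
    map ((TensorProduct.rid k H).toLinearMap ∘ₗ map LinearMap.id W.counit) LinearMap.id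
        ((TensorProduct.assoc k H H H).symm (map LinearMap.id W.comul u)) = u := by
  induction u using TensorProduct.induction_on with
  | zero => simp
  | add u v hu hv => simp only [map_add, hu, hv]
  | tmul a b => rw [map_tmul, LinearMap.id_apply, map_rid_id_assoc_symm_tmul, W.counit_comul]

lemma map_id_εtL (u : H ⊗[k] H) :
    map LinearMap.id W.εtL u =
      map LinearMap.id ((TensorProduct.lid k H).toLinearMap ∘ₗ map W.counit LinearMap.id)
        ((1 ⊗ₜ W.comul 1) * TensorProduct.assoc k H H H (u ⊗ₜ 1)) := by
  induction u using TensorProduct.induction_on with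
  | zero => simp
  | add u v hu hv => simp only [add_tmul, map_add, mul_add, hu, hv]
  | tmul a b =>
    simp only [map_tmul, assoc_tmul, Algebra.TensorProduct.tmul_mul_tmul, one_mul,
      LinearMap.id_apply, εtL_apply]
    congr 1
    generalize W.comul 1 = v
    induction v using TensorProduct.induction_on with
    | zero => simp
    | add v w hv hw => simp only [add_mul, map_add, hv, hw]
    | tmul c d => simp

lemma map_εsL_id (u : H ⊗[k] H) :
    map W.εsL LinearMap.id u =
      map ((TensorProduct.rid k H).toLinearMap ∘ₗ map LinearMap.id W.counit) LinearMap.id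
        ((TensorProduct.assoc k H H H).symm (1 ⊗ₜ u) * (W.comul 1 ⊗ₜ 1)) := by
  induction u using TensorProduct.induction_on with
  | zero => simp
  | add u v hu hv => simp only [tmul_add, map_add, add_mul, hu, hv]
  | tmul a b =>
    simp only [map_tmul, assoc_symm_tmul, Algebra.TensorProduct.tmul_mul_tmul, mul_one,
      LinearMap.id_apply, εsL_apply]
    congr 1
    generalize W.comul 1 = v
    induction v using TensorProduct.induction_on with
    | zero => simp
    | add v w hv hw => simp only [mul_add, map_add, hv, hw]
    | tmul c d => simp

lemma map_id_εtL_comul (h : H) :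
    map LinearMap.id W.εtL (W.comul h) = W.comul 1 * (h ⊗ₜ 1) := by
  have key : (1 ⊗ₜ W.comul 1) * TensorProduct.assoc k H H H (W.comul h ⊗ₜ 1) =
      TensorProduct.assoc k H H H (map W.comul LinearMap.id (W.comul 1 * (h ⊗ₜ 1))) := by
    rw [map_comul_id_mul, W.weak_unit_right, map_tmul, LinearMap.id_apply, mul_assoc,
      Algebra.TensorProduct.tmul_mul_tmul, comul_one_mul_comul, one_mul, assoc_mul,
      LinearEquiv.apply_symm_apply]
  rw [map_id_εtL, key, map_id_counit_assoc_map_comul_id]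

lemma map_εsL_id_comul (h : H) :
    map W.εsL LinearMap.id (W.comul h) = (1 ⊗ₜ h) * W.comul 1 := by
  have key : (TensorProduct.assoc k H H H).symm (1 ⊗ₜ W.comul h) * (W.comul 1 ⊗ₜ 1) =
      (TensorProduct.assoc k H H H).symm
        (map LinearMap.id W.comul ((1 ⊗ₜ h) * W.comul 1)) := by
    rw [map_id_comul_mul, map_id_comul_comul_one', map_tmul, LinearMap.id_apply, ← mul_assoc,
      Algebra.TensorProduct.tmul_mul_tmul, comul_mul_comul_one, one_mul, assoc_symm_mul,
      LinearEquiv.symm_apply_apply]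
  rw [map_εsL_id, key, map_counit_id_assoc_symm_map_id_comul]

lemma map_id_mulAntipode_assoc_tmul_one_mul (w u : H ⊗[k] H) :
    map LinearMap.id W.mulAntipode (TensorProduct.assoc k H H H (w ⊗ₜ 1) * (1 ⊗ₜ u)) =
      w * (1 ⊗ₜ W.mulAntipode u) := by
  induction w using TensorProduct.induction_on with
  | zero => simp
  | add v w hv hw => simp only [add_tmul, map_add, add_mul, hv, hw]
  | tmul a b => simp [mulAntipode_tmul_one_mul]

lemma map_antipodeMul_id_tmul_one_mul_assoc_symm (u w : H ⊗[k] H) :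
    map W.antipodeMul LinearMap.id ((u ⊗ₜ 1) * (TensorProduct.assoc k H H H).symm (1 ⊗ₜ w)) =
      (W.antipodeMul u ⊗ₜ 1) * w := by
  induction w using TensorProduct.induction_on with
  | zero => simp
  | add v w hv hw => simp only [tmul_add, map_add, mul_add, hv, hw]
  | tmul a b => simp [antipodeMul_mul_one_tmul]

lemma comul_one_mul_tmul_one {x : H} (hx : x ∈ Set.range W.εsL) :
    W.comul 1 * (x ⊗ₜ 1) = W.comul 1 * (1 ⊗ₜ W.antipode x) := by
  obtain ⟨h, rfl⟩ := hx
  have hεt : W.εtL = W.mulAntipode ∘ₗ W.comul :=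
    LinearMap.ext fun x => (W.mulAntipode_comul x).symm
  rw [← map_id_εtL_comul, antipode_εsL, hεt, ← LinearMap.id_comp LinearMap.id, map_comp,
    LinearMap.comp_apply, ← W.coassoc, map_comul_id_comul_εsL, assoc_mul,
    LinearEquiv.apply_symm_apply, map_id_mulAntipode_assoc_tmul_one_mul, LinearMap.comp_apply]

lemma one_tmul_mul_comul_one {z : H} (hz : z ∈ Set.range W.εtL) :
    (1 ⊗ₜ z) * W.comul 1 = (W.antipode z ⊗ₜ 1) * W.comul 1 := by
  obtain ⟨h, rfl⟩ := hz
  have hεs : W.εsL = W.antipodeMul ∘ₗ W.comul :=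
    LinearMap.ext fun x => (W.antipodeMul_comul x).symm
  rw [← map_εsL_id_comul, antipode_εtL, hεs, ← LinearMap.id_comp LinearMap.id, map_comp,
    LinearMap.comp_apply, map_comul_id_comul_εtL, map_antipodeMul_id_tmul_one_mul_assoc_symm,
    LinearMap.comp_apply]

lemma antipode_mem_range_εtL {x : H} (hx : x ∈ Set.range W.εsL) :
    W.antipode x ∈ Set.range W.εtL := by
  obtain ⟨h, rfl⟩ := hx
  exact ⟨_, (W.antipode_εsL h).symm⟩

lemma εsL_eq_self_of_mul_eq_one {x x' : H} (hx : x ∈ Set.range W.εsL) (h : x * x' = 1)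
    (h' : x' * x = 1) : W.εsL x' = x' := by
  obtain ⟨a, rfl⟩ := hx
  have hΔ1 : W.comul (W.εsL a) * (1 ⊗ₜ x') = W.comul 1 := by
    rw [comul_εsL, mul_assoc, Algebra.TensorProduct.tmul_mul_tmul, one_mul, h,
      ← Algebra.TensorProduct.one_def, mul_one]
  have hΔx' : W.comul x' = W.comul 1 * (1 ⊗ₜ x') :=
    calc W.comul x' = W.comul x' * (W.comul (W.εsL a) * (1 ⊗ₜ x')) := by
          rw [hΔ1, comul_mul_comul_one]
      _ = W.comul 1 * (1 ⊗ₜ x') := by rw [← mul_assoc, ← W.comul_mul, h']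
  rw [← antipodeMul_comul, hΔx', antipodeMul_mul_one_tmul, antipodeMul_comul, εsL_one, one_mul]

lemma antipode_mul_antipode_eq_one {x x' : H} (hx : x ∈ Set.range W.εsL)
    (hx' : x' ∈ Set.range W.εsL) (h : x * x' = 1) : W.antipode x' * W.antipode x = 1 := by
  have key : W.comul 1 * (1 ⊗ₜ (W.antipode x' * W.antipode x)) = W.comul 1 :=
    calc W.comul 1 * (1 ⊗ₜ (W.antipode x' * W.antipode x))
        = W.comul 1 * (1 ⊗ₜ W.antipode x') * (1 ⊗ₜ W.antipode x) := by
          rw [mul_assoc, Algebra.TensorProduct.tmul_mul_tmul, one_mul]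
      _ = W.comul 1 * (1 ⊗ₜ W.antipode x) * (x' ⊗ₜ 1) := by
          rw [← W.comul_one_mul_tmul_one hx', mul_assoc, mul_assoc,
            Algebra.TensorProduct.tmul_mul_tmul, Algebra.TensorProduct.tmul_mul_tmul,
            one_mul, one_mul, mul_one, mul_one]
      _ = W.comul 1 := by
          rw [← W.comul_one_mul_tmul_one hx, mul_assoc, Algebra.TensorProduct.tmul_mul_tmul, h,
            one_mul, ← Algebra.TensorProduct.one_def, mul_one]
  have := congrArg (fun u => TensorProduct.lid k H (map W.counit LinearMap.id u)) key
  simpa only [lid_map_mul_one_tmul, W.counit_comul, one_mul] using this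

lemma tmul_antipode_mul_comul_one {x x' : H} (hx : x ∈ Set.range W.εsL)
    (hS2 : W.antipode (W.antipode x) = x) (h : x' * x = 1) :
    (x' ⊗ₜ W.antipode x) * W.comul 1 = W.comul 1 := by
  have hexch := W.one_tmul_mul_comul_one (W.antipode_mem_range_εtL hx)
  rw [hS2] at hexch
  rw [← mul_one x', ← one_mul (W.antipode x), ← Algebra.TensorProduct.tmul_mul_tmul, mul_assoc,
    hexch, ← mul_assoc, Algebra.TensorProduct.tmul_mul_tmul, h, one_mul,
    ← Algebra.TensorProduct.one_def, one_mul]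

lemma comul_one_mul_tmul_antipode {x x' : H} (hx : x ∈ Set.range W.εsL)
    (hx' : x' ∈ Set.range W.εsL) (h : x * x' = 1) :
    W.comul 1 * (x' ⊗ₜ W.antipode x) = W.comul 1 := by
  rw [← mul_one x', ← one_mul (W.antipode x), ← Algebra.TensorProduct.tmul_mul_tmul,
    ← mul_assoc, W.comul_one_mul_tmul_one hx', mul_assoc, Algebra.TensorProduct.tmul_mul_tmul,
    one_mul, W.antipode_mul_antipode_eq_one hx hx' h, ← Algebra.TensorProduct.one_def, mul_one]

lemma comul_mul_eq_of_tmul_mul_comul_one {z x : H} (hz : z ∈ Set.range W.εtL)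
    (hx : x ∈ Set.range W.εsL) (h₁ : (x ⊗ₜ z) * W.comul 1 = W.comul 1)
    (h₂ : W.comul 1 * (x ⊗ₜ z) = W.comul 1) :
    W.comul (z * x) = ((z * x) ⊗ₜ (z * x)) * W.comul 1 ∧
      W.comul (z * x) = W.comul 1 * ((z * x) ⊗ₜ (z * x)) := by
  obtain ⟨c, rfl⟩ := hz
  obtain ⟨a, rfl⟩ := hx
  have hΔ : W.comul (W.εtL c * W.εsL a) = (W.εtL c ⊗ₜ 1) * (W.comul 1 * (1 ⊗ₜ W.εsL a)) := by
    rw [W.comul_mul, comul_εtL, comul_εsL, mul_assoc, ← mul_assoc (W.comul 1),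
      comul_one_mul_comul]
  have hsplit : (W.εtL c * W.εsL a) ⊗ₜ[k] (W.εtL c * W.εsL a) =
      (W.εtL c ⊗ₜ 1) * ((W.εsL a ⊗ₜ W.εtL c) * (1 ⊗ₜ W.εsL a)) := by
    simp only [Algebra.TensorProduct.tmul_mul_tmul, one_mul, mul_one]
  rw [hΔ, hsplit]
  constructor
  · rw [mul_assoc, mul_assoc, ← comul_εsL', comul_εsL, ← mul_assoc (W.εsL a ⊗ₜ[k] W.εtL c), h₁]
  · rw [← mul_assoc (W.comul 1), ← comul_εtL', comul_εtL, mul_assoc, ← mul_assoc (W.comul 1), h₂]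

end WeakHopf

/-- For invertible y ∈ H_s with S²(y) = y, S(y)y⁻¹ is group-like. -/
theorem weakHopf_trivial_groupLike {k H : Type*} [Field k] [Ring H] [Algebra k H]
    (W : WeakHopf k H) (y y' : H) (hy : y ∈ Set.range ⇑W.εsL)
    (hyy' : y * y' = 1) (hy'y : y' * y = 1)
    (hS2 : W.antipode (W.antipode y) = y) :
    W.IsGroupLike (W.antipode y * y') := by
  have hy' : y' ∈ Set.range W.εsL := ⟨y', W.εsL_eq_self_of_mul_eq_one hy hyy' hy'y⟩
  obtain ⟨hleft, hright⟩ := W.comul_mul_eq_of_tmul_mul_comul_one (W.antipode_mem_range_εtL hy)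
    hy' (W.tmul_antipode_mul_comul_one hy hS2 hy'y) (W.comul_one_mul_tmul_antipode hy hy' hyy')
  refine ⟨isUnit_iff_exists.2 ⟨y * W.antipode y', ?_, ?_⟩, hleft, hright⟩
  · rw [mul_assoc, ← mul_assoc y', hy'y, one_mul, W.antipode_mul_antipode_eq_one hy' hy hy'y]
  · rw [mul_assoc, ← mul_assoc (W.antipode y'), W.antipode_mul_antipode_eq_one hy hy' hyy',
      one_mul, hyy']
end

section
/- Every left integral λ in the dual of a finite-dimensional weak Hopf algebra H satisfies the invariance property: g₁ ⟨λ, hg₂⟩ = S(h₁) ⟨λ, h₂g⟩ for all g, h ∈ H. -/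
open TensorProduct

namespace WHAux

set_option synthInstance.maxHeartbeats 1000000
set_option maxHeartbeats 1000000
set_option maxRecDepth 10000

open TensorProduct LinearMap

variable {k H : Type*} [Field k] [Ring H] [Algebra k H]

variable {V₁ V₂ V₃ : Type*} [AddCommGroup V₁] [Module k V₁]
  [AddCommGroup V₂] [Module k V₂] [AddCommGroup V₃] [Module k V₃]

/-- contraction (a⊗b) ↦ φ(b) • f(a) -/
noncomputable def cR (f : V₁ →ₗ[k] V₃) (φ : V₂ →ₗ[k] k) : V₁ ⊗[k] V₂ →ₗ[k] V₃ :=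
  (TensorProduct.rid k V₃).toLinearMap ∘ₗ TensorProduct.map f φ

/-- contraction (a⊗b) ↦ φ(a) • f(b) -/
noncomputable def cL (φ : V₁ →ₗ[k] k) (f : V₂ →ₗ[k] V₃) : V₁ ⊗[k] V₂ →ₗ[k] V₃ :=
  (TensorProduct.lid k V₃).toLinearMap ∘ₗ TensorProduct.map φ f

/-- contraction (a⊗b) ↦ f(a) * g(b) -/
noncomputable def cM (f : V₁ →ₗ[k] H) (g : V₂ →ₗ[k] H) : V₁ ⊗[k] V₂ →ₗ[k] H :=
  (LinearMap.mul' k H) ∘ₗ TensorProduct.map f g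

/-- contraction (a⊗b) ↦ φ(a) * ψ(b) -/
noncomputable def cS (φ : V₁ →ₗ[k] k) (ψ : V₂ →ₗ[k] k) : V₁ ⊗[k] V₂ →ₗ[k] k :=
  (TensorProduct.lid k k).toLinearMap ∘ₗ TensorProduct.map φ ψ

@[simp] lemma cR_tmul (f : V₁ →ₗ[k] V₃) (φ : V₂ →ₗ[k] k) (a : V₁) (b : V₂) :
    cR f φ (a ⊗ₜ b) = φ b • f a := by simp [cR]

@[simp] lemma cL_tmul (φ : V₁ →ₗ[k] k) (f : V₂ →ₗ[k] V₃) (a : V₁) (b : V₂) :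
    cL φ f (a ⊗ₜ b) = φ a • f b := by simp [cL]

@[simp] lemma cM_tmul (f : V₁ →ₗ[k] H) (g : V₂ →ₗ[k] H) (a : V₁) (b : V₂) :
    cM f g (a ⊗ₜ b) = f a * g b := by simp [cM]

@[simp] lemma cS_tmul (φ : V₁ →ₗ[k] k) (ψ : V₂ →ₗ[k] k) (a : V₁) (b : V₂) :
    cS φ ψ (a ⊗ₜ b) = φ a * ψ b := by simp [cS, smul_eq_mul]

variable {W₁ W₂ V : Type*} [AddCommGroup W₁] [Module k W₁]
  [AddCommGroup W₂] [Module k W₂] [AddCommGroup V] [Module k V]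

lemma cR_comp_map (f : V₁ →ₗ[k] V₃) (φ : V₂ →ₗ[k] k)
    (g : W₁ →ₗ[k] V₁) (h : W₂ →ₗ[k] V₂) :
    cR f φ ∘ₗ TensorProduct.map g h = cR (f ∘ₗ g) (φ ∘ₗ h) := by
  apply TensorProduct.ext'; intro a b; simp

lemma cL_comp_map (φ : V₁ →ₗ[k] k) (f : V₂ →ₗ[k] V₃)
    (g : W₁ →ₗ[k] V₁) (h : W₂ →ₗ[k] V₂) :
    cL φ f ∘ₗ TensorProduct.map g h = cL (φ ∘ₗ g) (f ∘ₗ h) := by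
  apply TensorProduct.ext'; intro a b; simp

lemma cM_comp_map (f : V₁ →ₗ[k] H) (g : V₂ →ₗ[k] H)
    (p : W₁ →ₗ[k] V₁) (q : W₂ →ₗ[k] V₂) :
    cM f g ∘ₗ TensorProduct.map p q = cM (f ∘ₗ p) (g ∘ₗ q) := by
  apply TensorProduct.ext'; intro a b; simp

lemma cS_comp_map (φ : V₁ →ₗ[k] k) (ψ : V₂ →ₗ[k] k)
    (p : W₁ →ₗ[k] V₁) (q : W₂ →ₗ[k] V₂) :
    cS φ ψ ∘ₗ TensorProduct.map p q = cS (φ ∘ₗ p) (ψ ∘ₗ q) := by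
  apply TensorProduct.ext'; intro a b; simp

lemma comp_cR (L : V₃ →ₗ[k] V) (f : V₁ →ₗ[k] V₃) (φ : V₂ →ₗ[k] k) :
    L ∘ₗ cR f φ = cR (L ∘ₗ f) φ := by
  apply TensorProduct.ext'; intro a b; simp

lemma comp_cL (L : V₃ →ₗ[k] V) (φ : V₁ →ₗ[k] k) (f : V₂ →ₗ[k] V₃) :
    L ∘ₗ cL φ f = cL φ (L ∘ₗ f) := by
  apply TensorProduct.ext'; intro a b; simp

variable (W : WeakHopf k H)

/-- ε_s(x) = Σ ε(x·1₂) • 1₁ -/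
lemma esL_apply (x : H) :
    W.εsL x = cR LinearMap.id (W.counit ∘ₗ LinearMap.mulLeft k x) (W.comul 1) := by
  have hmap :
      ((TensorProduct.rid k H).toLinearMap
        ∘ₗ TensorProduct.map LinearMap.id
            (W.counit ∘ₗ LinearMap.mul' k H ∘ₗ (TensorProduct.comm k H H).toLinearMap)
        ∘ₗ (TensorProduct.assoc k H H H).toLinearMap
        ∘ₗ (TensorProduct.mk k (H ⊗[k] H) H).flip x) =
      cR LinearMap.id (W.counit ∘ₗ LinearMap.mulLeft k x) := by
    apply TensorProduct.ext'
    intro a b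
    simp [cR, mul'_apply]
  have := congrArg (fun (F : H ⊗[k] H →ₗ[k] H) => F (W.comul 1)) hmap
  simpa [WeakHopf.εsL] using this

/-- ε_t(x) = Σ ε(1₁·x) • 1₂ -/
lemma etL_apply (x : H) :
    W.εtL x = cL (W.counit ∘ₗ LinearMap.mulRight k x) LinearMap.id (W.comul 1) := by
  have hmap :
      ((TensorProduct.lid k H).toLinearMap
        ∘ₗ TensorProduct.map
            (W.counit ∘ₗ LinearMap.mul' k H ∘ₗ (TensorProduct.comm k H H).toLinearMap)
            LinearMap.id
        ∘ₗ (TensorProduct.assoc k H H H).symm.toLinearMap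
        ∘ₗ (TensorProduct.mk k H (H ⊗[k] H)) x) =
      cL (W.counit ∘ₗ LinearMap.mulRight k x) LinearMap.id := by
    apply TensorProduct.ext'
    intro a b
    simp [cL, mul'_apply]
  have := congrArg (fun (F : H ⊗[k] H →ₗ[k] H) => F (W.comul 1)) hmap
  simpa [WeakHopf.εtL] using this

lemma comul_one_mul (x : H) : W.comul x = W.comul 1 * W.comul x := by
  rw [← W.comul_mul, one_mul]

lemma comul_mul_one (x : H) : W.comul x = W.comul x * W.comul 1 := by
  rw [← W.comul_mul, mul_one]

/-- counit axiom restated: Σ ε(x₁) • x₂ = x -/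
lemma counit_cL (x : H) : cL W.counit LinearMap.id (W.comul x) = x := by
  simpa [cL] using W.counit_comul x

/-- counit axiom restated: Σ ε(x₂) • x₁ = x -/
lemma counit_cR (x : H) : cR LinearMap.id W.counit (W.comul x) = x := by
  simpa [cR] using W.comul_counit x

/-- axiom (5): Σ x₁ S(x₂) = ε_t(x) -/
lemma ax5 (x : H) : cM LinearMap.id W.antipode (W.comul x) = W.εtL x := by
  rw [etL_apply]
  have := W.antipode_right x
  simpa [cM, cL] using this

/-- axiom (6): Σ S(x₁) x₂ = ε_s(x) -/
lemma ax6 (x : H) : cM W.antipode LinearMap.id (W.comul x) = W.εsL x := by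
  rw [esL_apply]
  have := W.antipode_left x
  simpa [cM, cR] using this

/-- coassociativity in the convenient direction -/
lemma coassoc' (x : H) :
    (TensorProduct.map LinearMap.id W.comul) (W.comul x) =
      (TensorProduct.assoc k H H H)
        ((TensorProduct.map W.comul LinearMap.id) (W.comul x)) :=
  (W.coassoc x).symm

/-- ε_s ∘ comul-mult form : as maps, cM S id ∘ C = εsL -/
lemma ax6_map : cM W.antipode LinearMap.id ∘ₗ W.comul = W.εsL :=
  LinearMap.ext fun x => ax6 W x

lemma ax5_map : cM LinearMap.id W.antipode ∘ₗ W.comul = W.εtL :=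
  LinearMap.ext fun x => ax5 W x

/-- L12 : Σ ε_s(x₁) S(x₂) = S(x) -/
lemma es_conv_S (x : H) : cM W.εsL W.antipode (W.comul x) = W.antipode x := by
  have h := W.antipode_mid x
  have e1 : (TensorProduct.map
        (LinearMap.mul' k H ∘ₗ TensorProduct.map W.antipode LinearMap.id) W.antipode)
        ∘ₗ (TensorProduct.map W.comul LinearMap.id)
      = TensorProduct.map ((LinearMap.mul' k H ∘ₗ TensorProduct.map W.antipode LinearMap.id) ∘ₗ W.comul) W.antipode := by
    rw [← TensorProduct.map_comp]
    simp
  have e2 : (LinearMap.mul' k H ∘ₗ TensorProduct.map W.antipode LinearMap.id) ∘ₗ W.comul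
      = W.εsL := ax6_map W
  rw [← LinearMap.comp_apply (TensorProduct.map _ _) (TensorProduct.map _ _), e1, e2] at h
  simpa [cM] using h

/-- K2 : Σ S(x₁) ε_t(x₂) = S(x) -/
lemma S_conv_et (x : H) : cM W.antipode W.εtL (W.comul x) = W.antipode x := by
  have e1 : cM W.antipode W.εtL (W.comul x)
      = cM W.antipode (cM LinearMap.id W.antipode)
          ((TensorProduct.map LinearMap.id W.comul) (W.comul x)) := by
    rw [← LinearMap.comp_apply (cM _ _) (TensorProduct.map _ _), cM_comp_map,
      LinearMap.comp_id, ← ax5_map]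
  have e2 : (cM W.antipode (cM LinearMap.id W.antipode))
        ∘ₗ (TensorProduct.assoc k H H H).toLinearMap
      = (LinearMap.mul' k H) ∘ₗ
        (TensorProduct.map (LinearMap.mul' k H ∘ₗ TensorProduct.map W.antipode LinearMap.id)
          W.antipode) := by
    apply TensorProduct.ext_threefold
    intro a b c
    simp [cM, mul'_apply, mul_assoc]
  rw [e1, coassoc' W x]
  have e3 : cM W.antipode (cM LinearMap.id W.antipode)
      ((TensorProduct.assoc k H H H) ((TensorProduct.map W.comul LinearMap.id) (W.comul x)))
      = ((cM W.antipode (cM LinearMap.id W.antipode))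
          ∘ₗ (TensorProduct.assoc k H H H).toLinearMap)
          ((TensorProduct.map W.comul LinearMap.id) (W.comul x)) := rfl
  rw [e3, e2]
  simpa using W.antipode_mid x

/-- M2 : ε(a b) = ε(a ε_t(b)) -/
lemma M2 (a b : H) : W.counit (a * b) = W.counit (a * W.εtL b) := by
  have h := W.weak_counit_right a 1 b
  rw [mul_one] at h
  have e1 : W.counit (a * W.εtL b)
      = cL (W.counit ∘ₗ LinearMap.mulRight k b) (W.counit ∘ₗ LinearMap.mulLeft k a)
          (W.comul 1) := by
    rw [etL_apply]
    have : W.counit (a * (cL (W.counit ∘ₗ LinearMap.mulRight k b) LinearMap.id) (W.comul 1))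
        = ((W.counit ∘ₗ LinearMap.mulLeft k a)
            ∘ₗ cL (W.counit ∘ₗ LinearMap.mulRight k b) LinearMap.id) (W.comul 1) := by
      simp
    rw [this, comp_cL, LinearMap.comp_id]
  have e2 : (TensorProduct.lid k k).toLinearMap
        ∘ₗ (TensorProduct.map (W.counit ∘ₗ LinearMap.mulLeft k a)
            (W.counit ∘ₗ LinearMap.mulRight k b))
        ∘ₗ (TensorProduct.comm k H H).toLinearMap
      = cL (W.counit ∘ₗ LinearMap.mulRight k b) (W.counit ∘ₗ LinearMap.mulLeft k a) := by
    apply TensorProduct.ext'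
    intro u v
    simp [cL, smul_eq_mul, mul_comm]
  rw [e1, ← e2]
  simpa using h

/-- M2' : ε(a b) = ε(ε_s(a) b) -/
lemma M2' (a b : H) : W.counit (a * b) = W.counit (W.εsL a * b) := by
  have h := W.weak_counit_right a 1 b
  rw [mul_one] at h
  have e1 : W.counit (W.εsL a * b)
      = cR (W.counit ∘ₗ LinearMap.mulRight k b) (W.counit ∘ₗ LinearMap.mulLeft k a)
          (W.comul 1) := by
    rw [esL_apply]
    have : W.counit ((cR LinearMap.id (W.counit ∘ₗ LinearMap.mulLeft k a)) (W.comul 1) * b)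
        = ((W.counit ∘ₗ LinearMap.mulRight k b)
            ∘ₗ cR LinearMap.id (W.counit ∘ₗ LinearMap.mulLeft k a)) (W.comul 1) := by
      simp
    rw [this, comp_cR, LinearMap.comp_id]
  have e2 : (TensorProduct.lid k k).toLinearMap
        ∘ₗ (TensorProduct.map (W.counit ∘ₗ LinearMap.mulLeft k a)
            (W.counit ∘ₗ LinearMap.mulRight k b))
        ∘ₗ (TensorProduct.comm k H H).toLinearMap
      = cR (W.counit ∘ₗ LinearMap.mulRight k b) (W.counit ∘ₗ LinearMap.mulLeft k a) := by
    apply TensorProduct.ext'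
    intro u v
    simp [cR, smul_eq_mul, mul_comm]
  rw [e1, ← e2]
  simpa using h

/-- (ε⊗ε)∘Δ = ε -/
lemma counit_cS (z : H) : cS W.counit W.counit (W.comul z) = W.counit z := by
  have e : (cS W.counit W.counit : H ⊗[k] H →ₗ[k] k)
      = W.counit ∘ₗ cL W.counit (LinearMap.id : H →ₗ[k] H) := by
    apply TensorProduct.ext'
    intro u v
    simp [smul_eq_mul]
  rw [e, LinearMap.comp_apply, counit_cL]


/-- key double-tensor computation for B4 -/
lemma B4_aux (z : H) : ∀ t u : H ⊗[k] H,
    cL (W.counit ∘ₗ LinearMap.mulRight k z) (LinearMap.id : H ⊗[k] H →ₗ[k] H ⊗[k] H)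
      ((TensorProduct.assoc k H H H)
        (((TensorProduct.assoc k H H H).symm ((1:H) ⊗ₜ[k] u)) * (t ⊗ₜ[k] (1:H))))
    = u * ((cL (W.counit ∘ₗ LinearMap.mulRight k z) (LinearMap.id : H →ₗ[k] H) t) ⊗ₜ[k] (1:H)) := by
  have assoc_zero : (TensorProduct.assoc k H H H) (0 : (H ⊗[k] H) ⊗[k] H) = 0 :=
    map_zero (TensorProduct.assoc k H H H).toLinearMap
  have assoc_add : ∀ s t : (H ⊗[k] H) ⊗[k] H, (TensorProduct.assoc k H H H) (s + t)
      = (TensorProduct.assoc k H H H) s + (TensorProduct.assoc k H H H) t := fun s t =>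
    map_add (TensorProduct.assoc k H H H).toLinearMap s t
  have symm_add : ∀ s t : H ⊗[k] (H ⊗[k] H), (TensorProduct.assoc k H H H).symm (s + t)
      = (TensorProduct.assoc k H H H).symm s + (TensorProduct.assoc k H H H).symm t :=
    fun s t => map_add (TensorProduct.assoc k H H H).symm.toLinearMap s t
  intro t u
  induction t using TensorProduct.induction_on with
  | zero =>
      simp only [TensorProduct.zero_tmul, mul_zero, assoc_zero, map_zero, zero_mul]
  | add t₁ t₂ h₁ h₂ =>
      simp only [TensorProduct.add_tmul, mul_add, assoc_add, map_add, h₁, h₂, add_mul,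
        TensorProduct.add_tmul]
  | tmul p q =>
      induction u using TensorProduct.induction_on with
      | zero =>
          simp only [TensorProduct.tmul_zero, map_zero, symm_add, zero_mul, assoc_zero,
            TensorProduct.zero_tmul, mul_zero]
      | add u₁ u₂ g₁ g₂ =>
          simp only [TensorProduct.tmul_add, symm_add, map_add, add_mul, mul_add, g₁, g₂]
      | tmul a b =>
          simp only [TensorProduct.assoc_symm_tmul, Algebra.TensorProduct.tmul_mul_tmul,
            one_mul, mul_one, TensorProduct.assoc_tmul, cL_tmul, LinearMap.comp_apply,
            LinearMap.mulRight_apply, LinearMap.id_coe, id_eq, smul_tmul',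
            mul_smul_comm]

/-- B4 : Δ(ε_t(z)) = Δ(1) (ε_t(z) ⊗ 1) -/
lemma B4 (z : H) : W.comul (W.εtL z) = W.comul 1 * (W.εtL z ⊗ₜ[k] (1:H)) := by
  have e1 : W.comul (W.εtL z)
      = cL (W.counit ∘ₗ LinearMap.mulRight k z) W.comul (W.comul 1) := by
    rw [etL_apply, ← LinearMap.comp_apply W.comul (cL _ _), comp_cL, LinearMap.comp_id]
  have e2 : cL (W.counit ∘ₗ LinearMap.mulRight k z) W.comul (W.comul 1)
      = cL (W.counit ∘ₗ LinearMap.mulRight k z)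
          (LinearMap.id : H ⊗[k] H →ₗ[k] H ⊗[k] H)
          ((TensorProduct.map LinearMap.id W.comul) (W.comul 1)) := by
    rw [← LinearMap.comp_apply (cL _ _) (TensorProduct.map _ _), cL_comp_map]
    simp
  rw [e1, e2, coassoc' W 1, W.weak_unit_right, B4_aux W z (W.comul 1) (W.comul 1),
    ← etL_apply]

/-- pulling (c ⊗ 1) into the counit contraction -/
lemma pull_tmul_one : ∀ (t : H ⊗[k] H) (c : H),
    cL W.counit (LinearMap.id : H →ₗ[k] H) (t * (c ⊗ₜ[k] (1:H)))
      = cL (W.counit ∘ₗ LinearMap.mulRight k c) (LinearMap.id : H →ₗ[k] H) t := by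
  intro t c
  induction t using TensorProduct.induction_on with
  | zero => simp
  | add t₁ t₂ h₁ h₂ => simp only [add_mul, map_add, h₁, h₂]
  | tmul a b => simp [Algebra.TensorProduct.tmul_mul_tmul]

/-- D14 : w ε_t(v) = Σ ε(w₁ v) • w₂ -/
lemma D14 (w v : H) :
    w * W.εtL v
      = cL (W.counit ∘ₗ LinearMap.mulRight k v) (LinearMap.id : H →ₗ[k] H) (W.comul w) := by
  have h1 : w * W.εtL v = cL W.counit LinearMap.id (W.comul (w * W.εtL v)) :=
    (counit_cL W _).symm
  have h2 : W.comul (w * W.εtL v) = W.comul w * (W.εtL v ⊗ₜ[k] (1:H)) := by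
    rw [W.comul_mul, B4, ← mul_assoc, ← comul_mul_one]
  rw [h1, h2, pull_tmul_one]
  have : (W.counit ∘ₗ LinearMap.mulRight k (W.εtL v)) = (W.counit ∘ₗ LinearMap.mulRight k v) := by
    apply LinearMap.ext
    intro a
    simpa using (M2 W a v).symm
  rw [this]

section Rho

variable (lam : H →ₗ[k] k)

/-- ρ(x) = Σ λ(x₂) • x₁ -/
noncomputable def rho : H →ₗ[k] H := cR LinearMap.id lam ∘ₗ W.comul

lemma rho_apply (x : H) : rho W lam x = cR LinearMap.id lam (W.comul x) := rfl

/-- hypothesis: ρ = ε_s ∘ ρ -/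
lemma F1 (hlam : W.IsLeftIntegralDual lam) (x : H) :
    rho W lam x = W.εsL (rho W lam x) := by
  have h := hlam x
  have l : (TensorProduct.rid k H) ((TensorProduct.map LinearMap.id lam) (W.comul x))
      = rho W lam x := rfl
  have r : (TensorProduct.rid k H) ((TensorProduct.map W.εsL lam) (W.comul x))
      = W.εsL (rho W lam x) := by
    have : (cR W.εsL lam) (W.comul x) = W.εsL (rho W lam x) := by
      rw [rho_apply, ← LinearMap.comp_apply W.εsL (cR _ _), comp_cR, LinearMap.comp_id]
    exact this
  rw [l, r] at h
  exact h

/-- Δ ∘ ρ = (id ⊗ ρ) ∘ Δ -/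
lemma F2 (x : H) :
    W.comul (rho W lam x)
      = (TensorProduct.map LinearMap.id (rho W lam)) (W.comul x) := by
  have e1 : W.comul (rho W lam x) = cR W.comul lam (W.comul x) := by
    rw [rho_apply, ← LinearMap.comp_apply W.comul (cR _ _), comp_cR, LinearMap.comp_id]
  have e2 : cR W.comul lam
      = cR (LinearMap.id : H ⊗[k] H →ₗ[k] H ⊗[k] H) lam
          ∘ₗ (TensorProduct.map W.comul LinearMap.id) := by
    rw [cR_comp_map]; simp
  have e3 : (cR (LinearMap.id : H ⊗[k] H →ₗ[k] H ⊗[k] H) lam)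
      = (TensorProduct.map LinearMap.id (cR LinearMap.id lam))
          ∘ₗ (TensorProduct.assoc k H H H).toLinearMap := by
    apply TensorProduct.ext_threefold
    intro a b c
    simp [TensorProduct.tmul_smul]
  have e4 : (TensorProduct.map LinearMap.id (rho W lam)) (W.comul x)
      = (TensorProduct.map LinearMap.id (cR LinearMap.id lam))
          ((TensorProduct.map LinearMap.id W.comul) (W.comul x)) := by
    rw [← LinearMap.comp_apply (TensorProduct.map _ _) (TensorProduct.map _ _),
      ← TensorProduct.map_comp]
    rfl
  rw [e1, e2, LinearMap.comp_apply, e3, LinearMap.comp_apply, e4, coassoc' W x]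
  rfl

end Rho


/-- key double-tensor computation for B8 -/
lemma B8_aux (z : H) : ∀ t u : H ⊗[k] H,
    cR (LinearMap.id : H ⊗[k] H →ₗ[k] H ⊗[k] H) (W.counit ∘ₗ LinearMap.mulLeft k z)
      (((TensorProduct.assoc k H H H).symm ((1:H) ⊗ₜ[k] u)) * (t ⊗ₜ[k] (1:H)))
    = (TensorProduct.map LinearMap.id
        (LinearMap.mulLeft k
          (cR (LinearMap.id : H →ₗ[k] H) (W.counit ∘ₗ LinearMap.mulLeft k z) u))) t := by
  have symm_add : ∀ s t : H ⊗[k] (H ⊗[k] H), (TensorProduct.assoc k H H H).symm (s + t)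
      = (TensorProduct.assoc k H H H).symm s + (TensorProduct.assoc k H H H).symm t :=
    fun s t => map_add (TensorProduct.assoc k H H H).symm.toLinearMap s t
  intro t u
  induction t using TensorProduct.induction_on with
  | zero => simp only [TensorProduct.zero_tmul, mul_zero, map_zero]
  | add t₁ t₂ h₁ h₂ =>
      simp only [TensorProduct.add_tmul, mul_add, map_add, h₁, h₂]
  | tmul p q =>
      induction u using TensorProduct.induction_on with
      | zero =>
          simp only [TensorProduct.tmul_zero, map_zero, zero_mul, TensorProduct.zero_tmul]
          simp
      | add u₁ u₂ g₁ g₂ =>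
          simp only [TensorProduct.map_tmul, LinearMap.mulLeft_apply, LinearMap.id_coe,
            id_eq] at g₁ g₂ ⊢
          simp only [TensorProduct.tmul_add, symm_add, map_add, add_mul, g₁, g₂,
            TensorProduct.tmul_add]
      | tmul a b =>
          simp only [TensorProduct.assoc_symm_tmul, Algebra.TensorProduct.tmul_mul_tmul,
            one_mul, mul_one, cR_tmul, LinearMap.comp_apply, LinearMap.mulLeft_apply,
            LinearMap.id_coe, id_eq, TensorProduct.map_tmul, smul_mul_assoc,
            TensorProduct.tmul_smul]

/-- B8 : Δ(ε_s(z)) = Σ 1₁ ⊗ (ε_s(z) 1₂) -/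
lemma B8 (z : H) :
    W.comul (W.εsL z)
      = (TensorProduct.map LinearMap.id (LinearMap.mulLeft k (W.εsL z))) (W.comul 1) := by
  have e1 : W.comul (W.εsL z)
      = cR W.comul (W.counit ∘ₗ LinearMap.mulLeft k z) (W.comul 1) := by
    rw [esL_apply, ← LinearMap.comp_apply W.comul (cR _ _), comp_cR, LinearMap.comp_id]
  have e2 : cR W.comul (W.counit ∘ₗ LinearMap.mulLeft k z) (W.comul 1)
      = cR (LinearMap.id : H ⊗[k] H →ₗ[k] H ⊗[k] H) (W.counit ∘ₗ LinearMap.mulLeft k z)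
          ((TensorProduct.map W.comul LinearMap.id) (W.comul 1)) := by
    rw [← LinearMap.comp_apply (cR _ _) (TensorProduct.map _ _), cR_comp_map]
    simp
  rw [e1, e2, W.weak_unit_right, B8_aux W z (W.comul 1) (W.comul 1), ← esL_apply]

/-- pull lemma for D4 -/
lemma D4_aux (c : H) : ∀ t u : H ⊗[k] H,
    cR LinearMap.id W.counit
        (((TensorProduct.map LinearMap.id (LinearMap.mulLeft k c)) t) * u)
      = cR LinearMap.id (W.counit ∘ₗ LinearMap.mulLeft k c) (t * u) := by
  intro t u
  induction t using TensorProduct.induction_on with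
  | zero => simp
  | add t₁ t₂ h₁ h₂ => simp only [map_add, add_mul, h₁, h₂]
  | tmul p q =>
      induction u using TensorProduct.induction_on with
      | zero => simp
      | add u₁ u₂ g₁ g₂ => simp only [map_add, mul_add, g₁, g₂]
      | tmul a b =>
          simp [Algebra.TensorProduct.tmul_mul_tmul, mul_assoc]

/-- D4 : ε_s(v) y = Σ ε(v y₂) • y₁ -/
lemma D4 (v y : H) :
    W.εsL v * y = cR LinearMap.id (W.counit ∘ₗ LinearMap.mulLeft k v) (W.comul y) := by
  have h1 : W.εsL v * y = cR LinearMap.id W.counit (W.comul (W.εsL v * y)) :=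
    (counit_cR W _).symm
  have h2 : W.comul (W.εsL v * y)
      = ((TensorProduct.map LinearMap.id (LinearMap.mulLeft k (W.εsL v))) (W.comul 1))
          * W.comul y := by
    rw [W.comul_mul, B8]
  rw [h1, h2, D4_aux]
  have e : W.counit ∘ₗ LinearMap.mulLeft k (W.εsL v) = W.counit ∘ₗ LinearMap.mulLeft k v := by
    apply LinearMap.ext
    intro a
    simpa using (M2' W v a).symm
  rw [e, ← comul_one_mul]

/-- inner computation for E3 at 1 -/
lemma E31_aux (p' q' : H) : ∀ t : H ⊗[k] H,
    (TensorProduct.map (cR LinearMap.id W.counit) LinearMap.id)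
        ((((1:H) ⊗ₜ[k] p') ⊗ₜ[k] q') * (t ⊗ₜ[k] (1:H)))
      = (cR LinearMap.id (W.counit ∘ₗ LinearMap.mulLeft k p') t) ⊗ₜ[k] q' := by
  intro t
  induction t using TensorProduct.induction_on with
  | zero => simp
  | add t₁ t₂ h₁ h₂ =>
      simp only [TensorProduct.add_tmul, mul_add, map_add, h₁, h₂]
  | tmul p q =>
      simp [Algebra.TensorProduct.tmul_mul_tmul, smul_tmul']

/-- E3 at x = 1 : Σ ε_s(1₁) ⊗ 1₂ = Δ(1) -/
lemma E3_one : (TensorProduct.map W.εsL LinearMap.id) (W.comul 1) = W.comul 1 := by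
  have ha : ∀ u : H ⊗[k] H,
      (TensorProduct.map W.εsL LinearMap.id) u
        = (TensorProduct.map (cR LinearMap.id W.counit) LinearMap.id)
            (((TensorProduct.assoc k H H H).symm ((1:H) ⊗ₜ[k] u)) * ((W.comul 1) ⊗ₜ[k] (1:H))) := by
    intro u
    have symm_add : ∀ s t : H ⊗[k] (H ⊗[k] H), (TensorProduct.assoc k H H H).symm (s + t)
        = (TensorProduct.assoc k H H H).symm s + (TensorProduct.assoc k H H H).symm t :=
      fun s t => map_add (TensorProduct.assoc k H H H).symm.toLinearMap s t
    induction u using TensorProduct.induction_on with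
    | zero => simp
    | add u₁ u₂ h₁ h₂ =>
        simp only [TensorProduct.tmul_add, map_add, symm_add, add_mul, h₁, h₂]
    | tmul p' q' =>
        rw [TensorProduct.assoc_symm_tmul, E31_aux W p' q' (W.comul 1), ← esL_apply]
        simp
  have hb := ha (W.comul 1)
  rw [← W.weak_unit_right] at hb
  have hc : (TensorProduct.map (cR LinearMap.id W.counit) LinearMap.id)
        ((TensorProduct.map W.comul LinearMap.id) (W.comul 1))
      = (TensorProduct.map ((cR LinearMap.id W.counit) ∘ₗ W.comul) LinearMap.id)
          (W.comul 1) := by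
    rw [← LinearMap.comp_apply (TensorProduct.map _ _), ← TensorProduct.map_comp]
    simp
  have hd : (cR LinearMap.id W.counit) ∘ₗ W.comul = (LinearMap.id : H →ₗ[k] H) :=
    LinearMap.ext fun x => counit_cR W x
  rw [hb, hc, hd]
  simp

/-- inner swap for U3 -/
lemma U3_aux (a : H) : ∀ v : H ⊗[k] H,
    (TensorProduct.map (cM W.εsL W.antipode) LinearMap.id)
        ((TensorProduct.assoc k H H H).symm (a ⊗ₜ[k] v))
      = (TensorProduct.map (cM LinearMap.id W.antipode) LinearMap.id)
          ((TensorProduct.assoc k H H H).symm ((W.εsL a) ⊗ₜ[k] v)) := by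
  intro v
  have symm_add : ∀ s t : H ⊗[k] (H ⊗[k] H), (TensorProduct.assoc k H H H).symm (s + t)
      = (TensorProduct.assoc k H H H).symm s + (TensorProduct.assoc k H H H).symm t :=
    fun s t => map_add (TensorProduct.assoc k H H H).symm.toLinearMap s t
  induction v using TensorProduct.induction_on with
  | zero => simp
  | add v₁ v₂ h₁ h₂ =>
      simp only [TensorProduct.tmul_add, symm_add, map_add, h₁, h₂]
  | tmul p q => simp

/-- U3 : Σ S(1₁) ⊗ 1₂ = Σ ε_t(1₁) ⊗ 1₂ -/
lemma U3 :
    (TensorProduct.map W.antipode LinearMap.id) (W.comul 1)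
      = (TensorProduct.map W.εtL LinearMap.id) (W.comul 1) := by
  have hS : W.antipode = cM W.εsL W.antipode ∘ₗ W.comul :=
    LinearMap.ext fun x => (es_conv_S W x).symm
  have em : TensorProduct.map (cM W.εsL W.antipode ∘ₗ W.comul) (LinearMap.id : H →ₗ[k] H)
      = TensorProduct.map (cM W.εsL W.antipode) (LinearMap.id : H →ₗ[k] H)
          ∘ₗ TensorProduct.map W.comul (LinearMap.id : H →ₗ[k] H) := by
    apply TensorProduct.ext'
    intro a b
    simp
  have e1 : (TensorProduct.map W.antipode LinearMap.id) (W.comul 1)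
      = (TensorProduct.map (cM W.εsL W.antipode) LinearMap.id)
          ((TensorProduct.map W.comul LinearMap.id) (W.comul 1)) := by
    conv_lhs => rw [hS]
    rw [em]
    rfl
  have e2 : (TensorProduct.map W.comul LinearMap.id) (W.comul 1)
      = (TensorProduct.assoc k H H H).symm
          ((TensorProduct.map LinearMap.id W.comul) (W.comul 1)) := by
    rw [coassoc' W 1]
    exact (LinearEquiv.symm_apply_apply _ _).symm
  -- rewrite using U3_aux under the (map id C)(C 1) expansion
  have e3 : ∀ w : H ⊗[k] H,
      (TensorProduct.map (cM W.εsL W.antipode) LinearMap.id)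
          ((TensorProduct.assoc k H H H).symm
            ((TensorProduct.map LinearMap.id W.comul) w))
        = (TensorProduct.map (cM LinearMap.id W.antipode) LinearMap.id)
            ((TensorProduct.assoc k H H H).symm
              ((TensorProduct.map LinearMap.id W.comul)
                ((TensorProduct.map W.εsL LinearMap.id) w))) := by
    intro w
    induction w using TensorProduct.induction_on with
    | zero => simp
    | add w₁ w₂ h₁ h₂ => simp only [map_add, h₁, h₂]
    | tmul a b =>
        simp only [TensorProduct.map_tmul, LinearMap.id_coe, id_eq]
        exact U3_aux W a (W.comul b)
  have e4 := e3 (W.comul 1)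
  rw [(by rw [E3_one] :
      (TensorProduct.map LinearMap.id W.comul)
          ((TensorProduct.map W.εsL LinearMap.id) (W.comul 1))
        = (TensorProduct.map LinearMap.id W.comul) (W.comul 1))] at e4
  rw [e1, e2, e4, ← e2]
  -- now : (map (cM id S) id) ((map C id)(C 1)) = (map ((cM id S)∘C) id)(C 1) = (map εt id)(C1)
  rw [← LinearMap.comp_apply (TensorProduct.map (cM LinearMap.id W.antipode) LinearMap.id),
    ← TensorProduct.map_comp, ax5_map]
  simp

/-- P4 : S ∘ ε_s = ε_t ∘ ε_s -/
lemma P4 (z : H) : W.antipode (W.εsL z) = W.εtL (W.εsL z) := by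
  have e1 : W.antipode (W.εsL z)
      = cR W.antipode (W.counit ∘ₗ LinearMap.mulLeft k z) (W.comul 1) := by
    rw [esL_apply, ← LinearMap.comp_apply W.antipode (cR _ _), comp_cR, LinearMap.comp_id]
  have e2 : W.εtL (W.εsL z)
      = cR W.εtL (W.counit ∘ₗ LinearMap.mulLeft k z) (W.comul 1) := by
    rw [esL_apply, ← LinearMap.comp_apply W.εtL (cR _ _), comp_cR, LinearMap.comp_id]
  have e3 : cR W.antipode (W.counit ∘ₗ LinearMap.mulLeft k z) (W.comul 1)
      = cR LinearMap.id (W.counit ∘ₗ LinearMap.mulLeft k z)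
          ((TensorProduct.map W.antipode LinearMap.id) (W.comul 1)) := by
    rw [← LinearMap.comp_apply (cR _ _) (TensorProduct.map _ _), cR_comp_map]
    simp
  have e4 : cR W.εtL (W.counit ∘ₗ LinearMap.mulLeft k z) (W.comul 1)
      = cR LinearMap.id (W.counit ∘ₗ LinearMap.mulLeft k z)
          ((TensorProduct.map W.εtL LinearMap.id) (W.comul 1)) := by
    rw [← LinearMap.comp_apply (cR _ _) (TensorProduct.map _ _), cR_comp_map]
    simp
  rw [e1, e2, e3, e4, U3]


section CoreMachinery

/-- D' : a ⊗ (p⊗q) ↦ ε(a q) • p -/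
noncomputable def Dp : H ⊗[k] (H ⊗[k] H) →ₗ[k] H :=
  cL (W.counit ∘ₗ LinearMap.mul' k H) LinearMap.id
    ∘ₗ (TensorProduct.assoc k H H H).symm.toLinearMap
    ∘ₗ TensorProduct.map LinearMap.id (TensorProduct.comm k H H).toLinearMap

lemma Dp_eval (a : H) : ∀ t : H ⊗[k] H,
    Dp W (a ⊗ₜ[k] t) = cR LinearMap.id (W.counit ∘ₗ LinearMap.mulLeft k a) t := by
  intro t
  induction t using TensorProduct.induction_on with
  | zero => simp [Dp]
  | add t₁ t₂ h₁ h₂ =>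
      simp only [TensorProduct.tmul_add, map_add, h₁, h₂]
  | tmul p q => simp [Dp, mul'_apply]

lemma Dp_assoc_eval (v : H) : ∀ s : H ⊗[k] H,
    Dp W ((TensorProduct.assoc k H H H) (s ⊗ₜ[k] v))
      = cL (W.counit ∘ₗ LinearMap.mulRight k v) LinearMap.id s := by
  intro s
  induction s using TensorProduct.induction_on with
  | zero => simp
  | add s₁ s₂ h₁ h₂ =>
      simp only [TensorProduct.add_tmul, map_add, h₁, h₂]
  | tmul a b => simp [Dp, mul'_apply]

/-- SWAP : Σ w₁ ε_t(w₂) = Σ ε_s(w₁) w₂ -/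
lemma SWAP (w : H) :
    cM LinearMap.id W.εtL (W.comul w) = cM W.εsL LinearMap.id (W.comul w) := by
  have e1 : cM LinearMap.id W.εtL (W.comul w)
      = Dp W ((TensorProduct.assoc k H H H)
          ((TensorProduct.map W.comul LinearMap.id) (W.comul w))) := by
    have hmap : cM LinearMap.id W.εtL
        = (Dp W ∘ₗ (TensorProduct.assoc k H H H).toLinearMap)
            ∘ₗ (TensorProduct.map W.comul LinearMap.id) := by
      apply TensorProduct.ext'
      intro a b
      simp only [LinearMap.comp_apply, TensorProduct.map_tmul, LinearMap.id_coe, id_eq,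
        cM_tmul, LinearEquiv.coe_coe]
      rw [Dp_assoc_eval, ← D14]
    rw [hmap]
    rfl
  have e2 : Dp W ((TensorProduct.map LinearMap.id W.comul) (W.comul w))
      = cM W.εsL LinearMap.id (W.comul w) := by
    have hmap : Dp W ∘ₗ (TensorProduct.map LinearMap.id W.comul)
        = cM W.εsL LinearMap.id := by
      apply TensorProduct.ext'
      intro a y
      simp only [LinearMap.comp_apply, TensorProduct.map_tmul, LinearMap.id_coe, id_eq,
        cM_tmul]
      rw [Dp_eval, ← D4]
    rw [← hmap]
    rfl
  rw [e1, ← coassoc' W w, e2]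

/-- ε_s(a) ε_s(c) = ε_s(a ε_s(c)) -/
lemma ESMUL (a c : H) : W.εsL a * W.εsL c = W.εsL (a * W.εsL c) := by
  rw [D4]
  have e1 : ∀ t : H ⊗[k] H, ∀ z : H,
      cR LinearMap.id (W.counit ∘ₗ LinearMap.mulLeft k a)
          ((TensorProduct.map LinearMap.id (LinearMap.mulLeft k z)) t)
        = cR LinearMap.id (W.counit ∘ₗ LinearMap.mulLeft k (a * z)) t := by
    intro t z
    induction t using TensorProduct.induction_on with
    | zero => simp
    | add t₁ t₂ h₁ h₂ => simp only [map_add, h₁, h₂]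
    | tmul p q => simp [mul_assoc]
  rw [B8, e1, ← esL_apply]

/-- inner double-tensor computation for ES2 -/
lemma ES2_aux (a c : H) : ∀ t u : H ⊗[k] H,
    cR LinearMap.id (W.counit ∘ₗ LinearMap.mulLeft k
        (a * (cR LinearMap.id (W.counit ∘ₗ LinearMap.mulLeft k c) u))) t
      = (cR LinearMap.id
          (cS (W.counit ∘ₗ LinearMap.mulLeft k a) (W.counit ∘ₗ LinearMap.mulLeft k c)))
          ((TensorProduct.assoc k H H H)
            (((TensorProduct.assoc k H H H).symm ((1:H) ⊗ₜ[k] u)) * (t ⊗ₜ[k] (1:H)))) := by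
  have symm_add : ∀ s t : H ⊗[k] (H ⊗[k] H), (TensorProduct.assoc k H H H).symm (s + t)
      = (TensorProduct.assoc k H H H).symm s + (TensorProduct.assoc k H H H).symm t :=
    fun s t => map_add (TensorProduct.assoc k H H H).symm.toLinearMap s t
  have assoc_add : ∀ s t : (H ⊗[k] H) ⊗[k] H, (TensorProduct.assoc k H H H) (s + t)
      = (TensorProduct.assoc k H H H) s + (TensorProduct.assoc k H H H) t := fun s t =>
    map_add (TensorProduct.assoc k H H H).toLinearMap s t
  intro t u
  induction t using TensorProduct.induction_on with
  | zero => simp only [map_zero, TensorProduct.zero_tmul, mul_zero]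
  | add t₁ t₂ h₁ h₂ =>
      simp only [map_add, TensorProduct.add_tmul, mul_add, assoc_add, h₁, h₂]
  | tmul p q =>
      induction u using TensorProduct.induction_on with
      | zero =>
          have h0 : a * (cR LinearMap.id (W.counit ∘ₗ LinearMap.mulLeft k c))
              (0 : H ⊗[k] H) = 0 := by simp
          rw [h0]
          have hf : (W.counit ∘ₗ LinearMap.mulLeft k (0:H)) = 0 := by
            apply LinearMap.ext; intro x; simp
          rw [hf]
          have z2 : (TensorProduct.assoc k H H H).symm ((1:H) ⊗ₜ[k] (0 : H ⊗[k] H)) = 0 := by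
            simp only [TensorProduct.tmul_zero, map_zero]
          rw [z2, zero_mul, map_zero, map_zero]
          simp
      | add u₁ u₂ g₁ g₂ =>
          have lin : ∀ v₁ v₂ : H,
              cR LinearMap.id (W.counit ∘ₗ LinearMap.mulLeft k (a * (v₁ + v₂)))
                  (p ⊗ₜ[k] q)
                = cR LinearMap.id (W.counit ∘ₗ LinearMap.mulLeft k (a * v₁)) (p ⊗ₜ[k] q)
                  + cR LinearMap.id (W.counit ∘ₗ LinearMap.mulLeft k (a * v₂))
                      (p ⊗ₜ[k] q) := by
            intro v₁ v₂
            simp [mul_add, add_mul, add_smul, mul_assoc]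
          simp only [map_add, TensorProduct.tmul_add, symm_add, add_mul, assoc_add, g₁, g₂,
            lin]
      | tmul pp qq =>
          simp only [TensorProduct.assoc_symm_tmul, Algebra.TensorProduct.tmul_mul_tmul,
            one_mul, mul_one, TensorProduct.assoc_tmul, cR_tmul, cS_tmul,
            LinearMap.comp_apply, LinearMap.mulLeft_apply, LinearMap.id_coe, id_eq]
          rw [mul_smul_comm, smul_mul_assoc, map_smul, smul_eq_mul, mul_assoc a pp q,
            mul_comm (W.counit (c * qq)) (W.counit (a * (pp * q)))]

end CoreMachinery


section MergeMachinery

/-- ES2 : ε_s(a ε_s(c)) = Σ ε(a 1₂') ε(c 1₂'') • 1₁  (triple form) -/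
lemma ES2 (a c : H) :
    W.εsL (a * W.εsL c)
      = cR LinearMap.id
          ((cS (W.counit ∘ₗ LinearMap.mulLeft k a) (W.counit ∘ₗ LinearMap.mulLeft k c))
            ∘ₗ W.comul)
          (W.comul 1) := by
  have e1 : W.εsL (a * W.εsL c)
      = cR LinearMap.id (W.counit ∘ₗ LinearMap.mulLeft k
          (a * (cR LinearMap.id (W.counit ∘ₗ LinearMap.mulLeft k c) (W.comul 1))))
          (W.comul 1) := by
    rw [← esL_apply, ← esL_apply]
  rw [e1, ES2_aux W a c (W.comul 1) (W.comul 1), ← W.weak_unit_right, ← coassoc' W 1]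
  rw [← LinearMap.comp_apply (cR _ _) (TensorProduct.map _ _), cR_comp_map]
  simp

/-- MG₀ : (a⊗b)⊗(p⊗q) ↦ ε(a p) ε(b q) -/
noncomputable def MG : (H ⊗[k] H) ⊗[k] (H ⊗[k] H) →ₗ[k] k :=
  cS (W.counit ∘ₗ LinearMap.mul' k H) (W.counit ∘ₗ LinearMap.mul' k H)
    ∘ₗ (TensorProduct.tensorTensorTensorComm k H H H H).toLinearMap

@[simp] lemma MG_tmul (a b p q : H) :
    MG W ((a ⊗ₜ[k] b) ⊗ₜ[k] (p ⊗ₜ[k] q)) = W.counit (a * p) * W.counit (b * q) := by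
  simp [MG, mul'_apply]

lemma MG_mul : ∀ s t : H ⊗[k] H,
    MG W (s ⊗ₜ[k] t) = cS W.counit W.counit (s * t) := by
  intro s t
  induction s using TensorProduct.induction_on with
  | zero => simp
  | add s₁ s₂ h₁ h₂ => simp only [TensorProduct.add_tmul, map_add, add_mul, h₁, h₂]
  | tmul a b =>
      induction t using TensorProduct.induction_on with
      | zero => simp
      | add t₁ t₂ g₁ g₂ => simp only [TensorProduct.tmul_add, map_add, mul_add, g₁, g₂]
      | tmul p q => simp [Algebra.TensorProduct.tmul_mul_tmul]

/-- MG on comultiplications : ε(w u) -/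
lemma MG_comul (w u : H) : MG W ((W.comul w) ⊗ₜ[k] (W.comul u)) = W.counit (w * u) := by
  rw [MG_mul, ← W.comul_mul, counit_cS]

/-- εs in the second slot of MG is absorbed (M2') -/
lemma MG_es : ∀ s t : H ⊗[k] H,
    MG W (((TensorProduct.map LinearMap.id W.εsL) s) ⊗ₜ[k] t) = MG W (s ⊗ₜ[k] t) := by
  intro s t
  induction s using TensorProduct.induction_on with
  | zero => simp
  | add s₁ s₂ h₁ h₂ => simp only [TensorProduct.add_tmul, map_add, h₁, h₂]
  | tmul a b =>
      induction t using TensorProduct.induction_on with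
      | zero => simp
      | add t₁ t₂ g₁ g₂ => simp only [TensorProduct.tmul_add, map_add, g₁, g₂]
      | tmul p q =>
          simp only [TensorProduct.map_tmul, LinearMap.id_coe, id_eq, MG_tmul]
          rw [← M2' W b q]

/-- NN : s ⊗ (p⊗q) ↦ MG(s ⊗ Δq) • p -/
noncomputable def NN : (H ⊗[k] H) ⊗[k] (H ⊗[k] H) →ₗ[k] H :=
  cL (MG W) LinearMap.id
    ∘ₗ (TensorProduct.assoc k (H ⊗[k] H) (H ⊗[k] H) H).symm.toLinearMap
    ∘ₗ TensorProduct.map LinearMap.id (TensorProduct.map W.comul LinearMap.id)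
    ∘ₗ TensorProduct.map LinearMap.id (TensorProduct.comm k H H).toLinearMap

lemma NN_tmul (s : H ⊗[k] H) (p q : H) :
    NN W (s ⊗ₜ[k] (p ⊗ₜ[k] q)) = MG W (s ⊗ₜ[k] (W.comul q)) • p := by
  simp [NN]

/-- the final merge : NN ((id⊗εs)Δw ⊗ t) = Σ ε(w q) • p over t = Σ p⊗q -/
lemma FINAL_gen (w : H) : ∀ t : H ⊗[k] H,
    NN W (((TensorProduct.map LinearMap.id W.εsL) (W.comul w)) ⊗ₜ[k] t)
      = cR LinearMap.id (W.counit ∘ₗ LinearMap.mulLeft k w) t := by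
  intro t
  induction t using TensorProduct.induction_on with
  | zero => simp
  | add t₁ t₂ h₁ h₂ => simp only [TensorProduct.tmul_add, map_add, h₁, h₂]
  | tmul p q =>
      rw [NN_tmul, MG_es, MG_comul]
      simp

/-- FINAL : contraction collapses to ε_s -/
lemma FINAL (w : H) :
    NN W (((TensorProduct.map LinearMap.id W.εsL) (W.comul w)) ⊗ₜ[k] (W.comul 1))
      = W.εsL w := by
  rw [FINAL_gen, ← esL_apply]

end MergeMachinery


section CoreProof

lemma map_id_comp {A B C' : Type*} [AddCommGroup A] [Module k A] [AddCommGroup B]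
    [Module k B] [AddCommGroup C'] [Module k C'] (f : B →ₗ[k] C') (g : A →ₗ[k] B) :
    TensorProduct.map (LinearMap.id : H →ₗ[k] H) (f ∘ₗ g)
      = TensorProduct.map LinearMap.id f ∘ₗ TensorProduct.map LinearMap.id g := by
  apply TensorProduct.ext'
  intro a b
  simp

lemma MG_half (a b : H) : ∀ v : H ⊗[k] H,
    MG W ((a ⊗ₜ[k] b) ⊗ₜ[k] v)
      = cS (W.counit ∘ₗ LinearMap.mulLeft k a) (W.counit ∘ₗ LinearMap.mulLeft k b) v := by
  intro v
  induction v using TensorProduct.induction_on with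
  | zero => simp
  | add v₁ v₂ h₁ h₂ => simp only [TensorProduct.tmul_add, map_add, h₁, h₂]
  | tmul p q => simp

lemma NN_half (a b : H) : ∀ t : H ⊗[k] H,
    NN W ((a ⊗ₜ[k] b) ⊗ₜ[k] t)
      = cR LinearMap.id
          ((cS (W.counit ∘ₗ LinearMap.mulLeft k a) (W.counit ∘ₗ LinearMap.mulLeft k b))
            ∘ₗ W.comul) t := by
  intro t
  induction t using TensorProduct.induction_on with
  | zero => simp
  | add t₁ t₂ h₁ h₂ => simp only [TensorProduct.tmul_add, map_add, h₁, h₂]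
  | tmul p q =>
      rw [NN_tmul, MG_half]
      simp

/-- EXC : ε_s(a ε_s(b)) summed = NN contraction -/
lemma EXC : ∀ s : H ⊗[k] H,
    W.εsL (cM LinearMap.id W.εsL s) = NN W (s ⊗ₜ[k] (W.comul 1)) := by
  intro s
  induction s using TensorProduct.induction_on with
  | zero => simp
  | add s₁ s₂ h₁ h₂ =>
      simp only [map_add, TensorProduct.add_tmul, h₁, h₂]
  | tmul a b =>
      rw [NN_half]
      simp only [cM_tmul, LinearMap.id_coe, id_eq]
      exact ES2 W a b

/-- ESMUL as a map identity -/
lemma ESMUL_map : cM W.εsL W.εsL = W.εsL ∘ₗ cM LinearMap.id W.εsL := by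
  apply TensorProduct.ext'
  intro a b
  simp [ESMUL]

section WithIntegral

variable (lam : H →ₗ[k] k) (hlam : W.IsLeftIntegralDual lam)

lemma rho_es_map (hlam : W.IsLeftIntegralDual lam) :
    rho W lam = W.εsL ∘ₗ rho W lam :=
  LinearMap.ext fun x => F1 W lam hlam x

/-- CORE : ε_t ∘ ρ = ρ -/
lemma CORE (hlam : W.IsLeftIntegralDual lam) (x : H) :
    W.εtL (rho W lam x) = rho W lam x := by
  have F2map : W.comul ∘ₗ rho W lam
      = TensorProduct.map LinearMap.id (rho W lam) ∘ₗ W.comul :=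
    LinearMap.ext fun y => F2 W lam y
  -- c1 : εt(ρx) = Σ (ρx)₁ S((ρx)₂)
  have c1 : W.εtL (rho W lam x) = cM LinearMap.id W.antipode (W.comul (rho W lam x)) :=
    (ax5 W _).symm
  -- c2 : = Σ x₁ S(ρ(x₂))
  have c2 : cM LinearMap.id W.antipode (W.comul (rho W lam x))
      = cM LinearMap.id (W.antipode ∘ₗ rho W lam) (W.comul x) := by
    rw [F2 W lam x, ← LinearMap.comp_apply (cM _ _) (TensorProduct.map _ _), cM_comp_map]
    simp
  -- c3 : S ∘ ρ = εt ∘ ρ pointwise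
  have c3 : W.antipode ∘ₗ rho W lam = W.εtL ∘ₗ rho W lam := by
    apply LinearMap.ext
    intro y
    simp only [LinearMap.comp_apply]
    rw [F1 W lam hlam y, P4, ← F1 W lam hlam y]
  -- c4 : back to Σ (ρx)₁ εt((ρx)₂)
  have c4 : cM LinearMap.id (W.εtL ∘ₗ rho W lam) (W.comul x)
      = cM LinearMap.id W.εtL (W.comul (rho W lam x)) := by
    rw [F2 W lam x, ← LinearMap.comp_apply (cM _ _) (TensorProduct.map _ _), cM_comp_map]
    simp
  -- c5 : SWAP
  have c5 : cM LinearMap.id W.εtL (W.comul (rho W lam x))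
      = cM W.εsL LinearMap.id (W.comul (rho W lam x)) := SWAP W _
  -- c8 : C(ρx) absorbs an εs on the second leg
  have c8 : W.comul (rho W lam x)
      = (TensorProduct.map LinearMap.id W.εsL) (W.comul (rho W lam x)) := by
    conv_lhs => rw [F2 W lam x]
    rw [F2 W lam x, ← LinearMap.comp_apply (TensorProduct.map LinearMap.id W.εsL)
      (TensorProduct.map _ _), ← map_id_comp, ← rho_es_map W lam hlam]
  -- c6 : = cM εs εs (C (ρ x))
  have c6 : cM W.εsL LinearMap.id (W.comul (rho W lam x))
      = cM W.εsL W.εsL (W.comul (rho W lam x)) := by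
    conv_lhs => rw [c8]
    rw [← LinearMap.comp_apply (cM W.εsL LinearMap.id) (TensorProduct.map _ _), cM_comp_map]
    simp
  -- c7 : ESMUL + EXC
  have c7 : cM W.εsL W.εsL (W.comul (rho W lam x))
      = NN W ((W.comul (rho W lam x)) ⊗ₜ[k] (W.comul 1)) := by
    rw [ESMUL_map, LinearMap.comp_apply, EXC]
  rw [c1, c2, c3, c4, c5, c6, c7]
  conv_lhs => rw [c8]
  rw [FINAL]
  exact (F1 W lam hlam x).symm

end WithIntegral

end CoreProof


section MainBlocks

variable (lam : H →ₗ[k] k)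

/-- (ε⊗λ)∘Δ = λ -/
lemma counit_lam (z : H) : cS W.counit lam (W.comul z) = lam z := by
  have e : (cS W.counit lam : H ⊗[k] H →ₗ[k] k)
      = lam ∘ₗ cL W.counit (LinearMap.id : H →ₗ[k] H) := by
    apply TensorProduct.ext'
    intro u v
    simp [smul_eq_mul]
  rw [e, LinearMap.comp_apply, counit_cL]

/-- merge-lam : Σ ε(z₁ u₁) λ(z₂ u₂) = λ(z u) -/
lemma merge_lam (z u : H) :
    cS W.counit lam (W.comul z * W.comul u) = lam (z * u) := by
  rw [← W.comul_mul, counit_lam]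

/-- the auxiliary contraction for V22 -/
noncomputable def GV (z : H) : (H ⊗[k] H) ⊗[k] (H ⊗[k] H) →ₗ[k] H :=
  cL (W.counit ∘ₗ LinearMap.mul' k H)
      (cR LinearMap.id (W.counit ∘ₗ LinearMap.mulRight k z))
    ∘ₗ (TensorProduct.tensorTensorTensorComm k H H H H).toLinearMap

@[simp] lemma GV_tmul (z p q c d : H) :
    GV W z ((p ⊗ₜ[k] q) ⊗ₜ[k] (c ⊗ₜ[k] d))
      = W.counit (p * c) • (W.counit (d * z) • q) := by
  simp only [GV, LinearMap.comp_apply, LinearEquiv.coe_coe,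
    TensorProduct.tensorTensorTensorComm_tmul, cL_tmul, cR_tmul, mul'_apply,
    LinearMap.mulRight_apply, LinearMap.id_coe, id_eq]

lemma GV_eval_left (z c d : H) : ∀ t : H ⊗[k] H,
    GV W z (t ⊗ₜ[k] (c ⊗ₜ[k] d))
      = W.counit (d * z) • (cL (W.counit ∘ₗ LinearMap.mulRight k c) LinearMap.id t) := by
  intro t
  induction t using TensorProduct.induction_on with
  | zero => simp
  | add t₁ t₂ h₁ h₂ => simp only [TensorProduct.add_tmul, map_add, h₁, h₂, smul_add]
  | tmul p q =>
      simp only [GV_tmul, cL_tmul, LinearMap.comp_apply, LinearMap.mulRight_apply,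
        LinearMap.id_coe, id_eq]
      rw [smul_comm]

lemma GV_eval_right (z p q : H) : ∀ u : H ⊗[k] H,
    GV W z ((p ⊗ₜ[k] q) ⊗ₜ[k] u)
      = (cS (W.counit ∘ₗ LinearMap.mulLeft k p) (W.counit ∘ₗ LinearMap.mulRight k z) u) • q := by
  intro u
  induction u using TensorProduct.induction_on with
  | zero => simp
  | add u₁ u₂ h₁ h₂ => simp only [TensorProduct.tmul_add, map_add, h₁, h₂, add_smul]
  | tmul c d => simp [mul_smul]

/-- V22 : ε_t(y z) = Σ ε(y₂ z) • ε_t(y₁) -/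
lemma V22 (y z : H) :
    W.εtL (y * z)
      = cR W.εtL (W.counit ∘ₗ LinearMap.mulRight k z) (W.comul y) := by
  have gr : W.εtL (y * z) = GV W z ((W.comul 1) ⊗ₜ[k] (W.comul y)) := by
    rw [etL_apply]
    have key : ∀ t : H ⊗[k] H,
        cL (W.counit ∘ₗ LinearMap.mulRight k (y * z)) LinearMap.id t
          = GV W z (t ⊗ₜ[k] (W.comul y)) := by
      intro t
      induction t using TensorProduct.induction_on with
      | zero => simp
      | add t₁ t₂ h₁ h₂ => simp only [TensorProduct.add_tmul, map_add, h₁, h₂]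
      | tmul p q =>
          rw [GV_eval_right]
          have wcl := W.weak_counit_left p y z
          have hthis : W.counit (p * (y * z))
              = cS (W.counit ∘ₗ LinearMap.mulLeft k p)
                  (W.counit ∘ₗ LinearMap.mulRight k z) (W.comul y) := by
            rw [← mul_assoc]
            simpa [cS] using wcl
          simp only [cL_tmul, LinearMap.comp_apply, LinearMap.mulRight_apply,
            LinearMap.id_coe, id_eq]
          rw [hthis]
    exact key (W.comul 1)
  have gl : ∀ u : H ⊗[k] H,
      GV W z ((W.comul 1) ⊗ₜ[k] u)
        = cR W.εtL (W.counit ∘ₗ LinearMap.mulRight k z) u := by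
    intro u
    induction u using TensorProduct.induction_on with
    | zero => simp
    | add u₁ u₂ h₁ h₂ => simp only [TensorProduct.tmul_add, map_add, h₁, h₂]
    | tmul c d =>
        rw [GV_eval_left, ← etL_apply]
        simp
  rw [gr, gl (W.comul y)]

end MainBlocks


section E3general

/-- Ψ for E3 : (a⊗b) ⊗ ((p⊗q)⊗r) ↦ (ε(a q) • p) ⊗ (b r) -/
noncomputable def PsiE : (H ⊗[k] H) ⊗[k] ((H ⊗[k] H) ⊗[k] H) →ₗ[k] H ⊗[k] H :=
  TensorProduct.map (Dp W) (LinearMap.mul' k H)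
    ∘ₗ (TensorProduct.tensorTensorTensorComm k H H (H ⊗[k] H) H).toLinearMap

@[simp] lemma PsiE_tmul (a b : H) (pq : H ⊗[k] H) (r : H) :
    PsiE W ((a ⊗ₜ[k] b) ⊗ₜ[k] (pq ⊗ₜ[k] r)) = (Dp W (a ⊗ₜ[k] pq)) ⊗ₜ[k] (b * r) := by
  simp [PsiE, mul'_apply]

/-- e3b : (ε_s ⊗ id)(t u) = Ψ(t ⊗ (Y(u) Z)) -/
lemma E3_aux : ∀ t u : H ⊗[k] H,
    (TensorProduct.map W.εsL LinearMap.id) (t * u)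
      = PsiE W (t ⊗ₜ[k]
          (((TensorProduct.assoc k H H H).symm ((1:H) ⊗ₜ[k] u)) * ((W.comul 1) ⊗ₜ[k] (1:H)))) := by
  have symm_add : ∀ s t : H ⊗[k] (H ⊗[k] H), (TensorProduct.assoc k H H H).symm (s + t)
      = (TensorProduct.assoc k H H H).symm s + (TensorProduct.assoc k H H H).symm t :=
    fun s t => map_add (TensorProduct.assoc k H H H).symm.toLinearMap s t
  intro t u
  induction t using TensorProduct.induction_on with
  | zero => simp [TensorProduct.zero_tmul]
  | add t₁ t₂ h₁ h₂ =>
      simp only [add_mul, map_add, TensorProduct.add_tmul, h₁, h₂]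
  | tmul a b =>
      induction u using TensorProduct.induction_on with
      | zero => simp [TensorProduct.tmul_zero]
      | add u₁ u₂ g₁ g₂ =>
          simp only [mul_add, map_add, TensorProduct.tmul_add, symm_add, add_mul, g₁, g₂]
      | tmul p' q' =>
          rw [TensorProduct.assoc_symm_tmul]
          have prod : ((((1:H) ⊗ₜ[k] p') ⊗ₜ[k] q') * ((W.comul 1) ⊗ₜ[k] (1:H)))
              = ((((1:H) ⊗ₜ[k] p') * (W.comul 1)) ⊗ₜ[k] (q' * 1)) := by
            simp [Algebra.TensorProduct.tmul_mul_tmul]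
          rw [prod, mul_one]
          have key : ∀ s : H ⊗[k] H,
              PsiE W ((a ⊗ₜ[k] b) ⊗ₜ[k] ((((1:H) ⊗ₜ[k] p') * s) ⊗ₜ[k] q'))
                = (cR LinearMap.id (W.counit ∘ₗ LinearMap.mulLeft k (a * p')) s)
                    ⊗ₜ[k] (b * q') := by
            intro s
            induction s using TensorProduct.induction_on with
            | zero => simp
            | add s₁ s₂ j₁ j₂ =>
                rw [mul_add, TensorProduct.add_tmul, TensorProduct.tmul_add, map_add,
                  j₁, j₂, map_add, ← TensorProduct.add_tmul]
            | tmul xx yy =>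
                simp only [Algebra.TensorProduct.tmul_mul_tmul, one_mul, PsiE_tmul]
                rw [Dp_eval]
                simp [smul_tmul', mul_assoc]
          rw [key (W.comul 1), ← esL_apply]
          simp [Algebra.TensorProduct.tmul_mul_tmul]

/-- inner evaluation for E3 finish -/
lemma PsiE_inner (p q r : H) : ∀ s : H ⊗[k] H,
    PsiE W (s ⊗ₜ[k] ((p ⊗ₜ[k] q) ⊗ₜ[k] r))
      = p ⊗ₜ[k] (cL W.counit LinearMap.id (s * (q ⊗ₜ[k] r))) := by
  intro s
  induction s using TensorProduct.induction_on with
  | zero => simp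
  | add s₁ s₂ h₁ h₂ =>
      simp only [TensorProduct.add_tmul, map_add, add_mul, h₁, h₂, TensorProduct.tmul_add]
  | tmul a b =>
      simp only [PsiE_tmul, Algebra.TensorProduct.tmul_mul_tmul]
      rw [Dp_eval]
      simp [smul_tmul', TensorProduct.tmul_smul]

/-- E3 : Σ ε_s(x₁) ⊗ x₂ = Σ 1₁ ⊗ x 1₂ -/
lemma E3 (x : H) :
    (TensorProduct.map W.εsL LinearMap.id) (W.comul x)
      = (TensorProduct.map LinearMap.id (LinearMap.mulLeft k x)) (W.comul 1) := by
  have e1 : (TensorProduct.map W.εsL LinearMap.id) (W.comul x)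
      = PsiE W ((W.comul x) ⊗ₜ[k]
          (((TensorProduct.assoc k H H H).symm ((1:H) ⊗ₜ[k] (W.comul 1)))
            * ((W.comul 1) ⊗ₜ[k] (1:H)))) := by
    rw [← E3_aux W (W.comul x) (W.comul 1), ← comul_mul_one]
  have e2 : (TensorProduct.map W.comul LinearMap.id) (W.comul 1)
      = (TensorProduct.assoc k H H H).symm
          ((TensorProduct.map LinearMap.id W.comul) (W.comul 1)) := by
    rw [coassoc' W 1]
    exact (LinearEquiv.symm_apply_apply _ _).symm
  have e3 : ∀ w : H ⊗[k] (H ⊗[k] H),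
      PsiE W ((W.comul x) ⊗ₜ[k] ((TensorProduct.assoc k H H H).symm w))
        = (TensorProduct.map LinearMap.id
            (cL W.counit LinearMap.id ∘ₗ LinearMap.mulLeft k (W.comul x))) w := by
    intro w
    have symm_add : ∀ s t : H ⊗[k] (H ⊗[k] H), (TensorProduct.assoc k H H H).symm (s + t)
        = (TensorProduct.assoc k H H H).symm s + (TensorProduct.assoc k H H H).symm t :=
      fun s t => map_add (TensorProduct.assoc k H H H).symm.toLinearMap s t
    induction w using TensorProduct.induction_on with
    | zero => simp
    | add w₁ w₂ h₁ h₂ =>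
        simp only [symm_add, TensorProduct.tmul_add, map_add, h₁, h₂]
    | tmul p v =>
        induction v using TensorProduct.induction_on with
        | zero => simp
        | add v₁ v₂ j₁ j₂ =>
            have ta : p ⊗ₜ[k] (v₁ + v₂) = p ⊗ₜ[k] v₁ + p ⊗ₜ[k] v₂ :=
              TensorProduct.tmul_add p v₁ v₂
            rw [ta, symm_add]
            simp only [TensorProduct.tmul_add, map_add, j₁, j₂]
        | tmul q r =>
            rw [TensorProduct.assoc_symm_tmul, PsiE_inner]
            simp
  have e4 : (cL W.counit LinearMap.id ∘ₗ LinearMap.mulLeft k (W.comul x)) ∘ₗ W.comul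
      = LinearMap.mulLeft k x := by
    apply LinearMap.ext
    intro u
    simp only [LinearMap.comp_apply, LinearMap.mulLeft_apply]
    rw [← W.comul_mul, counit_cL]
  rw [e1, ← W.weak_unit_right, e2, e3 ((TensorProduct.map LinearMap.id W.comul) (W.comul 1))]
  rw [← LinearMap.comp_apply (TensorProduct.map _ _) (TensorProduct.map _ _), ← map_id_comp,
    e4]

end E3general



section MABlock

lemma map_comp_id {A B C' : Type*} [AddCommGroup A] [Module k A] [AddCommGroup B]
    [Module k B] [AddCommGroup C'] [Module k C'] (f : B →ₗ[k] C') (g : A →ₗ[k] B) :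
    TensorProduct.map (f ∘ₗ g) (LinearMap.id : H →ₗ[k] H)
      = TensorProduct.map f LinearMap.id ∘ₗ TensorProduct.map g LinearMap.id := by
  apply TensorProduct.ext'
  intro a b
  simp

lemma phi_eval (a : H) : ∀ t : H ⊗[k] H,
    (TensorProduct.map (LinearMap.mul' k H) LinearMap.id)
        ((TensorProduct.assoc k H H H).symm (a ⊗ₜ[k] t))
      = (TensorProduct.map (LinearMap.mulLeft k a) LinearMap.id) t := by
  intro t
  induction t using TensorProduct.induction_on with
  | zero => simp
  | add t₁ t₂ h₁ h₂ => simp only [TensorProduct.tmul_add, map_add, h₁, h₂]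
  | tmul u v => simp [mul'_apply]

/-- Φ : (h₁⊗h₂) ↦ (S(h₁) ⊗ 1) Δ(h₂ g) -/
noncomputable def PhiMA (g : H) : H ⊗[k] H →ₗ[k] H ⊗[k] H :=
  (TensorProduct.map (LinearMap.mul' k H) LinearMap.id)
    ∘ₗ (TensorProduct.assoc k H H H).symm.toLinearMap
    ∘ₗ (TensorProduct.map W.antipode (W.comul ∘ₗ LinearMap.mulRight k g))

lemma PhiMA_tmul (g a b : H) :
    PhiMA W g (a ⊗ₜ[k] b)
      = (TensorProduct.map (LinearMap.mulLeft k (W.antipode a)) LinearMap.id)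
          (W.comul (b * g)) := by
  simp only [PhiMA, LinearMap.comp_apply, TensorProduct.map_tmul, LinearMap.id_coe, id_eq,
    LinearMap.mulRight_apply, LinearEquiv.coe_coe]
  rw [phi_eval]

noncomputable def B5 (g : H) : H ⊗[k] (H ⊗[k] H) →ₗ[k] H ⊗[k] H :=
  (TensorProduct.map (LinearMap.mul' k H) LinearMap.id)
    ∘ₗ (TensorProduct.assoc k H H H).symm.toLinearMap
    ∘ₗ (TensorProduct.map W.antipode (LinearMap.mulRight k (W.comul g)))

lemma B5_eq (g : H) : PhiMA W g = B5 W g ∘ₗ (TensorProduct.map LinearMap.id W.comul) := by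
  apply TensorProduct.ext'
  intro a b
  simp only [PhiMA, B5, LinearMap.comp_apply, TensorProduct.map_tmul, LinearMap.id_coe,
    id_eq, LinearMap.mulRight_apply, LinearEquiv.coe_coe]
  rw [W.comul_mul]

lemma push_mul (x b c : H) : ∀ u : H ⊗[k] H,
    (TensorProduct.map (LinearMap.mulLeft k x) LinearMap.id) ((b ⊗ₜ[k] c) * u)
      = (((x * b) ⊗ₜ[k] c) * u) := by
  intro u
  induction u using TensorProduct.induction_on with
  | zero => simp
  | add u₁ u₂ h₁ h₂ => simp only [mul_add, map_add, h₁, h₂]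
  | tmul p q => simp [Algebra.TensorProduct.tmul_mul_tmul, mul_assoc]

noncomputable def B6 (g : H) : (H ⊗[k] H) ⊗[k] H →ₗ[k] H ⊗[k] H :=
  (LinearMap.mulRight k (W.comul g))
    ∘ₗ (TensorProduct.map (cM W.antipode LinearMap.id) LinearMap.id)

lemma B5_assoc (g : H) :
    B5 W g ∘ₗ (TensorProduct.assoc k H H H).toLinearMap = B6 W g := by
  apply TensorProduct.ext_threefold
  intro a b c
  simp only [B5, B6, LinearMap.comp_apply, LinearEquiv.coe_coe, TensorProduct.assoc_tmul,
    TensorProduct.map_tmul, LinearMap.id_coe, id_eq, LinearMap.mulRight_apply, cM_tmul]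
  rw [phi_eval, push_mul]

lemma mulpush2 (h : H) : ∀ t u : H ⊗[k] H,
    ((TensorProduct.map LinearMap.id (LinearMap.mulLeft k h)) t) * u
      = (TensorProduct.map LinearMap.id (LinearMap.mulLeft k h)) (t * u) := by
  intro t u
  induction t using TensorProduct.induction_on with
  | zero => simp
  | add t₁ t₂ h₁ h₂ => simp only [map_add, add_mul, h₁, h₂]
  | tmul a b =>
      induction u using TensorProduct.induction_on with
      | zero => simp
      | add u₁ u₂ g₁ g₂ => simp only [map_add, mul_add, g₁, g₂]
      | tmul p q => simp [Algebra.TensorProduct.tmul_mul_tmul, mul_assoc]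

/-- MA-elt : Σ g₁ ⊗ h g₂ = Σ (S(h₁) ⊗ 1) Δ(h₂ g) -/
lemma MA_elt (g h : H) :
    (TensorProduct.map LinearMap.id (LinearMap.mulLeft k h)) (W.comul g)
      = PhiMA W g (W.comul h) := by
  rw [B5_eq, LinearMap.comp_apply, coassoc' W h]
  have step : B5 W g ((TensorProduct.assoc k H H H)
        ((TensorProduct.map W.comul LinearMap.id) (W.comul h)))
      = B6 W g ((TensorProduct.map W.comul LinearMap.id) (W.comul h)) := by
    rw [← B5_assoc]
    rfl
  rw [step]
  simp only [B6, LinearMap.comp_apply]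
  rw [← LinearMap.comp_apply (TensorProduct.map (cM W.antipode LinearMap.id) LinearMap.id),
    ← map_comp_id, ax6_map]
  rw [LinearMap.mulRight_apply, E3, mulpush2, ← comul_one_mul]

/-- the M-A block : LHS of the theorem equals T' -/
lemma MA (lam : H →ₗ[k] k) (g h : H) :
    cR LinearMap.id (lam ∘ₗ LinearMap.mulLeft k h) (W.comul g)
      = cM W.antipode (rho W lam ∘ₗ LinearMap.mulRight k g) (W.comul h) := by
  have e1 : cR LinearMap.id (lam ∘ₗ LinearMap.mulLeft k h) (W.comul g)
      = cR LinearMap.id lam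
          ((TensorProduct.map LinearMap.id (LinearMap.mulLeft k h)) (W.comul g)) := by
    rw [← LinearMap.comp_apply (cR _ _) (TensorProduct.map _ _), cR_comp_map]
    simp
  have pull : ∀ (c : H) (t : H ⊗[k] H),
      cR LinearMap.id lam ((TensorProduct.map (LinearMap.mulLeft k c) LinearMap.id) t)
        = c * cR LinearMap.id lam t := by
    intro c t
    induction t using TensorProduct.induction_on with
    | zero => simp
    | add t₁ t₂ h₁ h₂ => simp only [map_add, h₁, h₂, mul_add]
    | tmul p q => simp [mul_smul_comm]
  have e3 : cR LinearMap.id lam (PhiMA W g (W.comul h))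
      = cM W.antipode (rho W lam ∘ₗ LinearMap.mulRight k g) (W.comul h) := by
    have hmap : (cR LinearMap.id lam) ∘ₗ PhiMA W g
        = cM W.antipode (rho W lam ∘ₗ LinearMap.mulRight k g) := by
      apply TensorProduct.ext'
      intro a b
      simp only [LinearMap.comp_apply, cM_tmul, LinearMap.mulRight_apply]
      rw [PhiMA_tmul, pull]
      rfl
    rw [← hmap]
    rfl
  rw [e1, MA_elt, e3]

end MABlock


section TauMul

variable (lam : H →ₗ[k] k)

noncomputable def JJ : H ⊗[k] H →ₗ[k] H :=
  cR W.εtL (W.counit ∘ₗ LinearMap.mul' k H)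
    ∘ₗ (TensorProduct.assoc k H H H).toLinearMap
    ∘ₗ (TensorProduct.map W.comul LinearMap.id)

lemma JJ_sub (c : H) : ∀ s : H ⊗[k] H,
    cR W.εtL (W.counit ∘ₗ LinearMap.mul' k H) ((TensorProduct.assoc k H H H) (s ⊗ₜ[k] c))
      = cR W.εtL (W.counit ∘ₗ LinearMap.mulRight k c) s := by
  intro s
  induction s using TensorProduct.induction_on with
  | zero => simp
  | add s₁ s₂ h₁ h₂ => simp only [TensorProduct.add_tmul, map_add, h₁, h₂]
  | tmul a b => simp [mul'_apply]

lemma JJ_eval (a c : H) :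
    JJ W (a ⊗ₜ[k] c) = cR W.εtL (W.counit ∘ₗ LinearMap.mulRight k c) (W.comul a) := by
  simp only [JJ, LinearMap.comp_apply, TensorProduct.map_tmul, LinearMap.id_coe, id_eq,
    LinearEquiv.coe_coe]
  rw [JJ_sub]

lemma JJ_V22 (a c : H) : JJ W (a ⊗ₜ[k] c) = W.εtL (a * c) := by
  rw [JJ_eval, ← V22]

noncomputable def GG1 : (H ⊗[k] H) ⊗[k] (H ⊗[k] H) →ₗ[k] H :=
  cR (W.εtL ∘ₗ LinearMap.mul' k H) (lam ∘ₗ LinearMap.mul' k H)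
    ∘ₗ (TensorProduct.tensorTensorTensorComm k H H H H).toLinearMap

noncomputable def GG2 : (H ⊗[k] H) ⊗[k] (H ⊗[k] H) →ₗ[k] H :=
  cR (JJ W) (lam ∘ₗ LinearMap.mul' k H)
    ∘ₗ (TensorProduct.tensorTensorTensorComm k H H H H).toLinearMap

lemma stepA : ∀ s t : H ⊗[k] H,
    cR W.εtL lam (s * t) = GG1 W lam (s ⊗ₜ[k] t) := by
  intro s t
  induction s using TensorProduct.induction_on with
  | zero => simp
  | add s₁ s₂ h₁ h₂ => simp only [add_mul, map_add, TensorProduct.add_tmul, h₁, h₂]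
  | tmul a b =>
      induction t using TensorProduct.induction_on with
      | zero => simp
      | add t₁ t₂ g₁ g₂ => simp only [mul_add, map_add, TensorProduct.tmul_add, g₁, g₂]
      | tmul c d =>
          simp [GG1, Algebra.TensorProduct.tmul_mul_tmul, mul'_apply]

lemma stepB : ∀ s t : H ⊗[k] H,
    GG1 W lam (s ⊗ₜ[k] t) = GG2 W lam (s ⊗ₜ[k] t) := by
  intro s t
  induction s using TensorProduct.induction_on with
  | zero => simp
  | add s₁ s₂ h₁ h₂ => simp only [TensorProduct.add_tmul, map_add, h₁, h₂]
  | tmul a b =>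
      induction t using TensorProduct.induction_on with
      | zero => simp
      | add t₁ t₂ g₁ g₂ => simp only [TensorProduct.tmul_add, map_add, g₁, g₂]
      | tmul c d =>
          simp only [GG1, GG2, LinearMap.comp_apply, LinearEquiv.coe_coe,
            TensorProduct.tensorTensorTensorComm_tmul, cR_tmul, mul'_apply]
          rw [JJ_V22]

variable (g : H)

noncomputable def KK : H ⊗[k] H →ₗ[k] k :=
  cS W.counit lam ∘ₗ LinearMap.mulRight k (W.comul g)

lemma KK_comul : KK W lam g ∘ₗ W.comul = lam ∘ₗ LinearMap.mulRight k g := by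
  apply LinearMap.ext
  intro z
  simp only [KK, LinearMap.comp_apply, LinearMap.mulRight_apply]
  rw [merge_lam]

noncomputable def A2 : (H ⊗[k] H) ⊗[k] H →ₗ[k] H :=
  cR W.εtL (KK W lam g) ∘ₗ (TensorProduct.assoc k H H H).toLinearMap

lemma A2_eval (b : H) : ∀ s : H ⊗[k] H,
    A2 W lam g (s ⊗ₜ[k] b)
      = cR W.εtL (KK W lam g ∘ₗ (TensorProduct.mk k H H).flip b) s := by
  intro s
  induction s using TensorProduct.induction_on with
  | zero => simp
  | add s₁ s₂ h₁ h₂ => simp only [TensorProduct.add_tmul, map_add, h₁, h₂]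
  | tmul a₁ a₂ => simp [A2]

lemma GG2_eval (a b : H) : ∀ u : H ⊗[k] H,
    GG2 W lam ((a ⊗ₜ[k] b) ⊗ₜ[k] u)
      = cR (JJ W ∘ₗ TensorProduct.mk k H H a) (lam ∘ₗ LinearMap.mulLeft k b) u := by
  intro u
  induction u using TensorProduct.induction_on with
  | zero => simp
  | add u₁ u₂ h₁ h₂ => simp only [TensorProduct.tmul_add, map_add, h₁, h₂]
  | tmul c d =>
      simp [GG2, mul'_apply]

noncomputable def Xib (b : H) : (H ⊗[k] H) ⊗[k] (H ⊗[k] H) →ₗ[k] H :=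
  cR W.εtL ((cS (W.counit ∘ₗ LinearMap.mul' k H) (lam ∘ₗ LinearMap.mulLeft k b))
      ∘ₗ (TensorProduct.assoc k H H H).symm.toLinearMap)
    ∘ₗ (TensorProduct.assoc k H H (H ⊗[k] H)).toLinearMap

@[simp] lemma Xib_tmul (b a₁ a₂ c d : H) :
    Xib W lam b ((a₁ ⊗ₜ[k] a₂) ⊗ₜ[k] (c ⊗ₜ[k] d))
      = (W.counit (a₂ * c) * lam (b * d)) • W.εtL a₁ := by
  simp [Xib, mul'_apply]

lemma Xib_eval_s (b c d : H) : ∀ s : H ⊗[k] H,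
    Xib W lam b (s ⊗ₜ[k] (c ⊗ₜ[k] d))
      = lam (b * d) • cR W.εtL (W.counit ∘ₗ LinearMap.mulRight k c) s := by
  intro s
  induction s using TensorProduct.induction_on with
  | zero => simp
  | add s₁ s₂ h₁ h₂ => simp only [TensorProduct.add_tmul, map_add, h₁, h₂, smul_add]
  | tmul a₁ a₂ =>
      simp only [Xib_tmul, cR_tmul, LinearMap.comp_apply, LinearMap.mulRight_apply]
      rw [mul_smul, smul_comm]

lemma CD_left (a b : H) : ∀ u : H ⊗[k] H,
    cR (JJ W ∘ₗ TensorProduct.mk k H H a) (lam ∘ₗ LinearMap.mulLeft k b) u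
      = Xib W lam b ((W.comul a) ⊗ₜ[k] u) := by
  intro u
  induction u using TensorProduct.induction_on with
  | zero => simp
  | add u₁ u₂ h₁ h₂ => simp only [TensorProduct.tmul_add, map_add, h₁, h₂]
  | tmul c d =>
      rw [Xib_eval_s]
      simp only [cR_tmul, LinearMap.comp_apply, LinearMap.mulLeft_apply,
        TensorProduct.mk_apply]
      rw [JJ_eval]

lemma Xib_eval2 (b a₁ a₂ : H) : ∀ u : H ⊗[k] H,
    Xib W lam b ((a₁ ⊗ₜ[k] a₂) ⊗ₜ[k] u)
      = (cS W.counit lam ((a₂ ⊗ₜ[k] b) * u)) • W.εtL a₁ := by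
  intro u
  induction u using TensorProduct.induction_on with
  | zero => simp
  | add u₁ u₂ h₁ h₂ => simp only [TensorProduct.tmul_add, map_add, h₁, h₂, mul_add, add_smul]
  | tmul c d => simp [Algebra.TensorProduct.tmul_mul_tmul]

lemma CD_right (b : H) : ∀ s : H ⊗[k] H,
    cR W.εtL (KK W lam g ∘ₗ (TensorProduct.mk k H H).flip b) s
      = Xib W lam b (s ⊗ₜ[k] (W.comul g)) := by
  intro s
  induction s using TensorProduct.induction_on with
  | zero => simp
  | add s₁ s₂ h₁ h₂ => simp only [TensorProduct.add_tmul, map_add, h₁, h₂]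
  | tmul a₁ a₂ =>
      rw [Xib_eval2]
      simp [KK]

lemma CD_total :
    GG2 W lam ∘ₗ ((TensorProduct.mk k (H ⊗[k] H) (H ⊗[k] H)).flip (W.comul g))
      = A2 W lam g ∘ₗ (TensorProduct.map W.comul LinearMap.id) := by
  apply TensorProduct.ext'
  intro a b
  simp only [LinearMap.comp_apply, LinearMap.flip_apply, TensorProduct.mk_apply,
    TensorProduct.map_tmul, LinearMap.id_coe, id_eq]
  rw [GG2_eval, CD_left, ← CD_right, A2_eval]

lemma TAU_MUL (y : H) :
    W.εtL (rho W lam (y * g)) = cR W.εtL (lam ∘ₗ LinearMap.mulRight k g) (W.comul y) := by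
  have e1 : W.εtL (rho W lam (y * g)) = cR W.εtL lam (W.comul (y * g)) := by
    rw [rho_apply, ← LinearMap.comp_apply W.εtL (cR _ _), comp_cR, LinearMap.comp_id]
  rw [e1, W.comul_mul, stepA, stepB]
  have e2 : GG2 W lam ((W.comul y) ⊗ₜ[k] (W.comul g))
      = A2 W lam g ((TensorProduct.map W.comul LinearMap.id) (W.comul y)) := by
    have := congrArg (fun (F : H ⊗[k] H →ₗ[k] H) => F (W.comul y)) (CD_total W lam g)
    simpa using this
  rw [e2]
  have e3 : A2 W lam g ((TensorProduct.map W.comul LinearMap.id) (W.comul y))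
      = cR W.εtL (KK W lam g ∘ₗ W.comul) (W.comul y) := by
    have j1 : cR W.εtL (KK W lam g ∘ₗ W.comul)
        = cR W.εtL (KK W lam g) ∘ₗ (TensorProduct.map LinearMap.id W.comul) := by
      rw [cR_comp_map]
      simp
    rw [j1, LinearMap.comp_apply, coassoc' W y]
    rfl
  rw [e3, KK_comul]

end TauMul

section Final

variable (lam : H →ₗ[k] k)

/-- regrouping lemma J2 -/
lemma J2 (f G : H →ₗ[k] H) (ψ : H →ₗ[k] k) (x : H) :
    cM f ((cR G ψ) ∘ₗ W.comul) (W.comul x)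
      = cR (cM f G ∘ₗ W.comul) ψ (W.comul x) := by
  have e1 : cM f ((cR G ψ) ∘ₗ W.comul)
      = cM f (cR G ψ) ∘ₗ (TensorProduct.map LinearMap.id W.comul) := by
    rw [cM_comp_map]
    simp
  have e2 : cM f (cR G ψ) ∘ₗ (TensorProduct.assoc k H H H).toLinearMap
      = cR (cM f G) ψ := by
    apply TensorProduct.ext_threefold
    intro a b c
    simp [mul_smul_comm]
  have e3 : cR (cM f G ∘ₗ W.comul) ψ
      = cR (cM f G) ψ ∘ₗ (TensorProduct.map W.comul LinearMap.id) := by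
    rw [cR_comp_map]
    simp
  rw [e1, LinearMap.comp_apply, coassoc' W x, e3, LinearMap.comp_apply, ← e2]
  rfl

/-- the M-C block -/
lemma MC (g h : H) :
    cM W.antipode ((W.εtL ∘ₗ rho W lam) ∘ₗ LinearMap.mulRight k g) (W.comul h)
      = cR W.antipode (lam ∘ₗ LinearMap.mulRight k g) (W.comul h) := by
  have tf : (W.εtL ∘ₗ rho W lam) ∘ₗ LinearMap.mulRight k g
      = (cR W.εtL (lam ∘ₗ LinearMap.mulRight k g)) ∘ₗ W.comul := by
    apply LinearMap.ext
    intro y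
    simp only [LinearMap.comp_apply, LinearMap.mulRight_apply]
    exact TAU_MUL W lam g y
  rw [tf, J2]
  have : cM W.antipode W.εtL ∘ₗ W.comul = W.antipode :=
    LinearMap.ext fun x => S_conv_et W x
  rw [this]

/-- the main theorem, in cR/cM form -/
lemma MAIN (hlam : W.IsLeftIntegralDual lam) (g h : H) :
    cR LinearMap.id (lam ∘ₗ LinearMap.mulLeft k h) (W.comul g)
      = cR W.antipode (lam ∘ₗ LinearMap.mulRight k g) (W.comul h) := by
  rw [MA W lam g h]
  have core_map : rho W lam ∘ₗ LinearMap.mulRight k g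
      = (W.εtL ∘ₗ rho W lam) ∘ₗ LinearMap.mulRight k g := by
    apply LinearMap.ext
    intro y
    simp only [LinearMap.comp_apply]
    exact (CORE W lam hlam _).symm
  rw [core_map, MC]

end Final


end WHAux

/-- Every left integral λ ∈ H* satisfies the invariance property
g₁⟨λ, hg₂⟩ = S(h₁)⟨λ, h₂g⟩. -/
theorem weakHopf_left_integral_invariance {k H : Type*} [Field k] [Ring H] [Algebra k H]
    [FiniteDimensional k H] (W : WeakHopf k H) (lam : H →ₗ[k] k)
    (hlam : W.IsLeftIntegralDual lam) :
    ∀ g h : H,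
      (TensorProduct.rid k H)
        ((TensorProduct.map LinearMap.id (lam ∘ₗ LinearMap.mulLeft k h)) (W.comul g)) =
      (TensorProduct.rid k H)
        ((TensorProduct.map W.antipode (lam ∘ₗ LinearMap.mulRight k g)) (W.comul h)) := by
  intro g h
  have := WHAux.MAIN W lam hlam g h
  simpa [WHAux.cR] using this
end
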